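/- arXiv:2206.03422 — 9 statements merged into one kernel-verified Lean document; each statement's English description precedes it below -/
import Mathlib

section
/- Let k ≥ 3 and ℓ ≥ 0 be integers. If G is a finite simple graph that is k-vertex-critical and (P3+ℓP1)-free, then the independence number of G satisfies α(G) < (k−1)²·(ℓ+3). -/
open SimpleGraph

/-- The graph `P₃ + ℓP₁`: disjoint union of a path on 3 vertices and `ℓ` isolated vertices. -/
def P3PlusP1 (ℓ : ℕ) : SimpleGraph (Fin 3 ⊕ Fin ℓ) :=
  pathGraph 3 ⊕g (⊥ : SimpleGraph (Fin ℓ))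

/-- `G` is `H`-free: no induced subgraph of `G` is isomorphic to `H`. -/
def HFree {W V : Type*} (H : SimpleGraph W) (G : SimpleGraph V) : Prop :=
  IsEmpty (H ↪g G)

/-- `G` is `k`-vertex-critical: `χ(G) = k` and `χ(G - v) < k` for every vertex `v`. -/
def VertexCritical {V : Type*} (G : SimpleGraph V) (k : ℕ) : Prop :=
  G.chromaticNumber = k ∧ ∀ v : V, (G.induce {v}ᶜ).chromaticNumber < k

/-- The independence number of a finite graph. -/
noncomputable def indepNumber (V : Type*) [Fintype V] (G : SimpleGraph V) : ℕ :=
  sSup {n : ℕ | ∃ S : Set V, S.Pairwise (fun a b => ¬ G.Adj a b) ∧ S.ncard = n}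

/-
Let `I` be a maximal independent set of `G` with more than `(k - 1)(ℓ + 1) + 1` vertices.
Two facts drive everything: a `(k - 1)`-colouring of `G - v` uses every colour on the
neighbourhood of `v` (by criticality), and no induced `P₃` of `G` admits `ℓ` independent
vertices anticomplete to it. With them one shows that every `u ∈ I` has a private neighbour
and that the sets `Q u = G.closedPrivateNeighborFinset I u`, consisting of `u` and its private
neighbours, are cliques which are pairwise anticomplete.

Choose `u ∈ I` with `|Q u|` minimal and a private neighbour `p` of `u`, and colour `G - p`.
Every colour missing on `Q u - p` is carried by a neighbour `z` of `p` with two neighbours in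
`I`, and such a `z` is complete to `Q u'` for all but `ℓ + 1` vertices `u' ∈ I`. Hence some
`u' ∈ I` has `Q u'` coloured only with the `|Q u| - 1` colours of `Q u - p`; as `Q u'` is a
clique avoiding `p`, `|Q u'| < |Q u|`, a contradiction. So `α(G) ≤ (k - 1)(ℓ + 1) + 1`, which
is less than `(k - 1)²(ℓ + 3)`.
-/

open Finset

namespace SimpleGraph

variable {V W : Type*} {G : SimpleGraph V}

lemma nonempty_embedding_of_map_adj_of_map_compl_adj {H : SimpleGraph W} (f : W → V)
    (hadj : ∀ x y, H.Adj x y → G.Adj (f x) (f y))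
    (hcompl : ∀ x y, Hᶜ.Adj x y → Gᶜ.Adj (f x) (f y)) : Nonempty (H ↪g G) := by
  have hne {x y} (hxy : x ≠ y) : f x ≠ f y := by
    by_cases h : H.Adj x y
    · exact (hadj x y h).ne
    · exact (hcompl x y ⟨hxy, h⟩).ne
  refine ⟨⟨⟨f, fun x y => not_imp_not.mp hne⟩, fun {x y} => ⟨fun h => ?_, hadj x y⟩⟩⟩
  by_contra hH
  exact ((G.compl_adj _ _).mp (hcompl x y ⟨fun hxy => h.ne (congrArg f hxy), hH⟩)).2 h

lemma exists_adj_of_maximal_isIndepSet {s : Set V} (hs : Maximal G.IsIndepSet s) {x : V}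
    (hx : x ∉ s) : ∃ y ∈ s, G.Adj x y := by
  by_contra! h
  have : G.IsIndepSet (insert x s) :=
    G.isClique_compl.mp ((G.isClique_compl.mpr hs.1).insert fun y hy hxy => ⟨hxy, h y hy⟩)
  exact hx (hs.2 this (Set.subset_insert x s) (Set.mem_insert x s))

def IsColoringOff {α : Type*} (G : SimpleGraph V) (v : V) (c : V → α) : Prop :=
  ∀ x y, G.Adj x y → x ≠ v → y ≠ v → c x ≠ c y

lemma IsColoringOff.injOn {α : Type*} {v : V} {c : V → α} (hc : G.IsColoringOff v c)
    {K : Set V} (hK : G.IsClique K) (hv : v ∉ K) : Set.InjOn c K := by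
  intro x hx y hy hxy
  by_contra hne
  exact hc x y (hK hx hy hne) (ne_of_mem_of_not_mem hx hv) (ne_of_mem_of_not_mem hy hv) hxy

lemma IsColoringOff.colorable {n : ℕ} {v : V} {c : V → Fin n} (hc : G.IsColoringOff v c)
    {i : Fin n} (hi : ∀ x, G.Adj v x → c x ≠ i) : G.Colorable n := by
  classical
  refine ⟨Coloring.mk (Function.update c v i) fun {x y} hxy => ?_⟩
  by_cases hx : x = v <;> by_cases hy : y = v
  · exact absurd (hx.trans hy.symm) hxy.ne
  · subst hx; simpa [hy] using (hi y hxy).symm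
  · subst hy; simpa [hx] using hi x hxy.symm
  · simpa [hx, hy] using hc x y hxy hx hy

lemma IsColoringOff.card_le_of_image_subset {α : Type*} [DecidableEq α] {v : V} {c : V → α}
    (hc : G.IsColoringOff v c) {K L : Finset V} (hK : G.IsClique K) (hv : v ∉ K)
    (hKL : K.image c ⊆ L.image c) : #K ≤ #L :=
  calc #K = #(K.image c) := (card_image_of_injOn (hc.injOn hK hv)).symm
    _ ≤ #(L.image c) := card_le_card hKL
    _ ≤ #L := card_image_le

end SimpleGraph

section

variable {V : Type*} {G : SimpleGraph V} {k ℓ : ℕ}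

lemma HFree.card_lt_of_isIndepSet (hfree : HFree (P3PlusP1 ℓ) G) {a b c : V}
    (hab : G.Adj a b) (hbc : G.Adj b c) (hac : Gᶜ.Adj a c) {S : Finset V}
    (hS : G.IsIndepSet S) (hSabc : ∀ s ∈ S, Gᶜ.Adj s a ∧ Gᶜ.Adj s b ∧ Gᶜ.Adj s c) :
    #S < ℓ := by
  by_contra! hℓ
  let e : Fin ℓ ↪ S := (Fin.castLEEmb hℓ).trans S.equivFin.symm.toEmbedding
  have hSc : Gᶜ.IsClique S := G.isClique_compl.mpr hS
  refine hfree.false (nonempty_embedding_of_map_adj_of_map_compl_adj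
    (Sum.elim ![a, b, c] fun i => (e i : V)) ?_ ?_).some
  · rintro (i | i) (j | j) h <;> simp [P3PlusP1, pathGraph_adj] at h
    fin_cases i <;> fin_cases j <;> simp_all [G.adj_symm]
  · rintro (i | i) (j | j) h
    · have hca := hac.symm
      fin_cases i <;> fin_cases j <;> simp_all [P3PlusP1, pathGraph_adj, compl_adj]
    · obtain ⟨hsa, hsb, hsc⟩ := hSabc _ (e j).2
      fin_cases i <;> simp [hsa.symm, hsb.symm, hsc.symm]
    · obtain ⟨hsa, hsb, hsc⟩ := hSabc _ (e i).2
      fin_cases j <;> simp [hsa, hsb, hsc]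
    · exact hSc (e i).2 (e j).2 (by simpa [Subtype.ext_iff.not, e.injective.eq_iff] using h.ne)

lemma VertexCritical.colorable_induce_compl (hcrit : VertexCritical G k) (v : V) :
    (G.induce {v}ᶜ).Colorable (k - 1) := by
  rw [← chromaticNumber_le_iff_colorable]
  exact Order.le_of_lt_add_one ((hcrit.2 v).trans_le (by norm_cast; omega))

lemma VertexCritical.exists_isColoringOff (hcrit : VertexCritical G k) (hk : 2 ≤ k) (v : V) :
    ∃ c : V → Fin (k - 1), G.IsColoringOff v c ∧ ∀ i, ∃ x, G.Adj v x ∧ c x = i := by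
  classical
  obtain ⟨C⟩ := hcrit.colorable_induce_compl v
  let c : V → Fin (k - 1) := fun x => if hx : x = v then ⟨0, by omega⟩ else C ⟨x, hx⟩
  have hc : G.IsColoringOff v c := fun x y hxy hx hy => by
    simpa [c, hx, hy] using C.valid (show (G.induce {v}ᶜ).Adj ⟨x, hx⟩ ⟨y, hy⟩ by simpa)
  refine ⟨c, hc, fun i => ?_⟩
  by_contra! hi
  have := (hc.colorable hi).chromaticNumber_le
  rw [hcrit.1, Nat.cast_le] at this
  omega

end

namespace SimpleGraph

variable {V : Type*} {G : SimpleGraph V} {k ℓ : ℕ} {I : Finset V} {u u' p q : V}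

def IsPrivateNeighbor (G : SimpleGraph V) (I : Finset V) (u p : V) : Prop :=
  G.Adj u p ∧ ∀ b ∈ I, G.Adj p b → b = u

lemma IsPrivateNeighbor.notMem (hI : G.IsIndepSet I) (hu : u ∈ I)
    (hp : G.IsPrivateNeighbor I u p) : p ∉ I :=
  fun hpI => hI hu hpI hp.1.ne hp.1

lemma IsPrivateNeighbor.compl_adj (hI : G.IsIndepSet I) (hu : u ∈ I)
    (hp : G.IsPrivateNeighbor I u p) {b : V} (hb : b ∈ I) (hbu : b ≠ u) : Gᶜ.Adj p b :=
  ⟨ne_of_mem_of_not_mem hb (hp.notMem hI hu) |>.symm, fun hpb => hbu (hp.2 b hb hpb)⟩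

lemma exists_isPrivateNeighbor (hfree : HFree (P3PlusP1 ℓ) G) (hcrit : VertexCritical G k)
    (hk : 2 ≤ k) (hI : G.IsIndepSet I) (hcard : (k - 1) * ℓ + 2 ≤ #I) (hu : u ∈ I) :
    ∃ p, G.IsPrivateNeighbor I u p := by
  classical
  obtain ⟨c, hc, hsurj⟩ := hcrit.exists_isColoringOff hk u
  -- pigeonhole: some colour class of `c` meets `I \ {u}` in more than `ℓ` vertices
  obtain ⟨i, -, hi⟩ := exists_lt_card_fiber_of_mul_lt_card_of_maps_to
    (s := I.erase u) (t := univ) (f := c) (n := ℓ) (fun _ _ => mem_univ _)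
    (by rw [card_univ, Fintype.card_fin, card_erase_of_mem hu]; omega)
  obtain ⟨w, huw, hwi⟩ := hsurj i
  refine ⟨w, huw, fun b hb hwb => ?_⟩
  by_contra hbu
  have hIc := G.isClique_compl.mpr hI
  have hwI : w ∉ I := fun hwI => hI hu hwI huw.ne huw
  refine (hfree.card_lt_of_isIndepSet huw hwb (hIc hu hb (Ne.symm hbu))
    (S := ({x ∈ I.erase u | c x = i}).erase b)
    (hI.mono fun s hs => mem_of_mem_erase (mem_of_mem_filter s (mem_of_mem_erase hs)))
    fun s hs => ?_).not_ge ?_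
  · simp only [mem_erase, mem_filter] at hs
    obtain ⟨hsb, ⟨hsu, hsI⟩, hsi⟩ := hs
    refine ⟨hIc hsI hu hsu, ⟨ne_of_mem_of_not_mem hsI hwI, fun hsw => ?_⟩, hIc hsI hb hsb⟩
    exact hc s w hsw hsu huw.ne.symm (hsi.trans hwi.symm)
  · have := pred_card_le_card_erase (s := {x ∈ I.erase u | c x = i}) (a := b)
    omega

lemma IsPrivateNeighbor.not_adj (hfree : HFree (P3PlusP1 ℓ) G) (hI : G.IsIndepSet I)
    (hcard : ℓ + 2 ≤ #I) (hu : u ∈ I) (hu' : u' ∈ I) (huu' : u ≠ u')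
    (hp : G.IsPrivateNeighbor I u p) (hq : G.IsPrivateNeighbor I u' q) : ¬G.Adj p q := by
  classical
  intro hpq
  have hIc := G.isClique_compl.mpr hI
  refine (hfree.card_lt_of_isIndepSet hp.1 hpq (hq.compl_adj hI hu' hu huu').symm
    (S := (I.erase u).erase u') (hI.mono fun s hs => ?_) fun s hs => ?_).not_ge ?_
  · exact mem_of_mem_erase (mem_of_mem_erase hs)
  · obtain ⟨hsu', hsu, hsI⟩ : s ≠ u' ∧ s ≠ u ∧ s ∈ I := by simpa using hs
    exact ⟨hIc hsI hu hsu, (hp.compl_adj hI hu hsI hsu).symm, (hq.compl_adj hI hu' hsI hsu').symm⟩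
  · have := pred_card_le_card_erase (s := I.erase u) (a := u')
    rw [card_erase_of_mem hu] at this
    omega

lemma IsPrivateNeighbor.adj (hfree : HFree (P3PlusP1 ℓ) G) (hI : G.IsIndepSet I)
    (hcard : ℓ + 1 ≤ #I) (hu : u ∈ I) (hp : G.IsPrivateNeighbor I u p)
    (hq : G.IsPrivateNeighbor I u q) (hpq : p ≠ q) : G.Adj p q := by
  classical
  by_contra hnpq
  refine (hfree.card_lt_of_isIndepSet hp.1.symm hq.1 ⟨hpq, hnpq⟩ (S := I.erase u)
    (hI.mono fun s hs => mem_of_mem_erase hs) fun s hs => ?_).not_ge ?_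
  · obtain ⟨hsu, hsI⟩ : s ≠ u ∧ s ∈ I := by simpa using hs
    exact ⟨(hp.compl_adj hI hu hsI hsu).symm, G.isClique_compl.mpr hI hsI hu hsu,
      (hq.compl_adj hI hu hsI hsu).symm⟩
  · rw [card_erase_of_mem hu]
    omega

section Fintype

variable [Fintype V]

open scoped Classical in
noncomputable def closedPrivateNeighborFinset (G : SimpleGraph V) (I : Finset V) (u : V) :
    Finset V :=
  insert u ({p | G.IsPrivateNeighbor I u p} : Finset V)

lemma mem_closedPrivateNeighborFinset {x : V} :
    x ∈ G.closedPrivateNeighborFinset I u ↔ x = u ∨ G.IsPrivateNeighbor I u x := by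
  simp [closedPrivateNeighborFinset]

lemma isClique_closedPrivateNeighborFinset (hfree : HFree (P3PlusP1 ℓ) G)
    (hI : G.IsIndepSet I) (hcard : ℓ + 1 ≤ #I) (hu : u ∈ I) :
    G.IsClique (G.closedPrivateNeighborFinset I u) := by
  intro x hx y hy hxy
  simp only [mem_coe, mem_closedPrivateNeighborFinset] at hx hy
  rcases hx with rfl | hx <;> rcases hy with rfl | hy
  · exact absurd rfl hxy
  · exact hy.1
  · exact hx.1.symm
  · exact hx.adj hfree hI hcard hu hy hxy

lemma compl_adj_of_mem_closedPrivateNeighborFinset (hfree : HFree (P3PlusP1 ℓ) G)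
    (hI : G.IsIndepSet I) (hcard : ℓ + 2 ≤ #I) (hu : u ∈ I) (hu' : u' ∈ I) (huu' : u ≠ u')
    {x y : V} (hx : x ∈ G.closedPrivateNeighborFinset I u)
    (hy : y ∈ G.closedPrivateNeighborFinset I u') : Gᶜ.Adj x y := by
  rw [mem_closedPrivateNeighborFinset] at hx hy
  rcases hx with rfl | hx <;> rcases hy with rfl | hy
  · exact G.isClique_compl.mpr hI hu hu' huu'
  · exact (hy.compl_adj hI hu' hu huu').symm
  · exact hx.compl_adj hI hu hu' (Ne.symm huu')
  · refine ⟨fun hxy => ?_, hx.not_adj hfree hI hcard hu hu' huu' hy⟩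
    subst hxy
    exact huu' (hy.2 u hu hx.1.symm)

lemma card_le_of_forall_exists_not_adj (hfree : HFree (P3PlusP1 ℓ) G) (hI : G.IsIndepSet I)
    (hcard : ℓ + 2 ≤ #I) {z a b : V} (ha : a ∈ I) (hb : b ∈ I) (hab : a ≠ b) (hza : G.Adj z a)
    (hzb : G.Adj z b) {N : Finset V} (hNI : N ⊆ I)
    (hN : ∀ u ∈ N, ∃ x ∈ G.closedPrivateNeighborFinset I u, ¬G.Adj z x) : #N ≤ ℓ + 1 := by
  classical
  -- picking in each `Q u` a non-neighbour `f u` of `z` yields an independent set which, apart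
  -- from `f a` and `f b`, is anticomplete to the induced path `a - z - b`
  choose! f hfQ hfz using hN
  have hQ {u u'} (hu : u ∈ N) (hu' : u' ∈ N) (huu' : u ≠ u') : Gᶜ.Adj (f u) (f u') :=
    compl_adj_of_mem_closedPrivateNeighborFinset hfree hI hcard (hNI hu) (hNI hu') huu'
      (hfQ u hu) (hfQ u' hu')
  have hQI {u c} (hu : u ∈ N) (hc : c ∈ I) (hcu : u ≠ c) : Gᶜ.Adj (f u) c :=
    compl_adj_of_mem_closedPrivateNeighborFinset hfree hI hcard (hNI hu) hc hcu (hfQ u hu)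
      (mem_closedPrivateNeighborFinset.mpr (Or.inl rfl))
  have hN' : ∀ u ∈ (N.erase a).erase b, u ∈ N ∧ u ≠ a ∧ u ≠ b := fun u hu => by
    simp only [mem_erase] at hu
    exact ⟨hu.2.2, hu.2.1, hu.1⟩
  have hinj : Set.InjOn f ((N.erase a).erase b) := fun u hu u' hu' h => by
    by_contra huu'
    exact (hQ (hN' u hu).1 (hN' u' hu').1 huu').ne h
  have hS := hfree.card_lt_of_isIndepSet hza.symm hzb ⟨hab, hI ha hb hab⟩
    (S := ((N.erase a).erase b).image f) ?_ ?_
  · rw [card_image_of_injOn hinj] at hS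
    have := pred_card_le_card_erase (s := N.erase a) (a := b)
    have := pred_card_le_card_erase (s := N) (a := a)
    omega
  · simp only [coe_image]
    rintro _ ⟨u, hu, rfl⟩ _ ⟨u', hu', rfl⟩ hne
    exact (hQ (hN' u hu).1 (hN' u' hu').1 fun h => hne (h ▸ rfl)).2
  · simp only [mem_image]
    rintro _ ⟨u, hu, rfl⟩
    obtain ⟨huN, hua, hub⟩ := hN' u hu
    refine ⟨hQI huN ha hua, ⟨fun hfu => ?_, fun h => hfz u huN h.symm⟩, hQI huN hb hub⟩
    exact (hQI huN ha hua).2 (hfu ▸ hza)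

lemma IsPrivateNeighbor.exists_adj_adj_of_adj (hfree : HFree (P3PlusP1 ℓ) G)
    (hI : G.IsIndepSet I) (hcard : ℓ + 2 ≤ #I) (hImax : ∀ x ∉ I, ∃ y ∈ I, G.Adj x y)
    (hu : u ∈ I) (hp : G.IsPrivateNeighbor I u p) {z : V} (hpz : G.Adj p z)
    (hzQ : z ∉ G.closedPrivateNeighborFinset I u) :
    ∃ a ∈ I, ∃ b ∈ I, a ≠ b ∧ G.Adj z a ∧ G.Adj z b := by
  have hzI : z ∉ I := fun hzI =>
    hzQ (mem_closedPrivateNeighborFinset.mpr (Or.inl (hp.2 z hzI hpz)))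
  obtain ⟨a, ha, hza⟩ := hImax z hzI
  by_contra! h
  have hz : G.IsPrivateNeighbor I a z :=
    ⟨hza.symm, fun b hb hzb => by_contra fun hba => h a ha b hb (Ne.symm hba) hza hzb⟩
  rcases eq_or_ne u a with rfl | hua
  · exact hzQ (mem_closedPrivateNeighborFinset.mpr (Or.inr hz))
  · exact (compl_adj_of_mem_closedPrivateNeighborFinset hfree hI hcard hu ha hua
      (mem_closedPrivateNeighborFinset.mpr (Or.inr hp))
      (mem_closedPrivateNeighborFinset.mpr (Or.inr hz))).2 hpz

lemma exists_forall_adj_closedPrivateNeighborFinset (hfree : HFree (P3PlusP1 ℓ) G)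
    (hI : G.IsIndepSet I) (hcard : ℓ + 2 ≤ #I) {ι : Type*} (J : Finset ι) (z : ι → V)
    (hz : ∀ j ∈ J, ∃ a ∈ I, ∃ b ∈ I, a ≠ b ∧ G.Adj (z j) a ∧ G.Adj (z j) b)
    (hJ : #J * (ℓ + 1) + 1 < #I) (u : V) :
    ∃ u' ∈ I, u' ≠ u ∧ ∀ j ∈ J, ∀ x ∈ G.closedPrivateNeighborFinset I u', G.Adj (z j) x := by
  classical
  set B := J.biUnion fun j => {u' ∈ I | ∃ x ∈ G.closedPrivateNeighborFinset I u', ¬G.Adj (z j) x}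
  have hB : #B ≤ #J * (ℓ + 1) := card_biUnion_le_card_mul _ _ _ fun j hj => by
    obtain ⟨a, ha, b, hb, hab, hza, hzb⟩ := hz j hj
    exact card_le_of_forall_exists_not_adj hfree hI hcard ha hb hab hza hzb
      (filter_subset _ _) fun u' hu' => (mem_filter.mp hu').2
  obtain ⟨u', hu'⟩ : (I \ insert u B).Nonempty := by
    have := le_card_sdiff (insert u B) I
    have := card_insert_le u B
    rw [← card_pos]
    omega
  obtain ⟨hu'I, hu'B⟩ := mem_sdiff.mp hu'
  refine ⟨u', hu'I, fun h => hu'B (h ▸ mem_insert_self u B), fun j hj x hx => ?_⟩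
  by_contra hzx
  exact hu'B (mem_insert_of_mem (mem_biUnion.mpr ⟨j, hj, mem_filter.mpr ⟨hu'I, x, hx, hzx⟩⟩))

lemma exists_card_closedPrivateNeighborFinset_lt (hfree : HFree (P3PlusP1 ℓ) G)
    (hcrit : VertexCritical G k) (hk : 2 ≤ k) (hI : G.IsIndepSet I)
    (hImax : ∀ x ∉ I, ∃ y ∈ I, G.Adj x y) (hcard : (k - 1) * (ℓ + 1) + 2 ≤ #I) (hu : u ∈ I)
    (hp : G.IsPrivateNeighbor I u p) :
    ∃ u' ∈ I, #(G.closedPrivateNeighborFinset I u') < #(G.closedPrivateNeighborFinset I u) := by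
  classical
  have hcard₂ : ℓ + 2 ≤ #I := by
    have := Nat.le_mul_of_pos_left (ℓ + 1) (show 0 < k - 1 by omega)
    omega
  set Q := G.closedPrivateNeighborFinset I
  have hpQ : p ∈ Q u := mem_closedPrivateNeighborFinset.mpr (Or.inr hp)
  obtain ⟨c, hc, hsurj⟩ := hcrit.exists_isColoringOff hk p
  set C := ((Q u).erase p).image c
  choose z hpz hzc using hsurj
  have hz : ∀ κ ∈ univ \ C, ∃ a ∈ I, ∃ b ∈ I, a ≠ b ∧ G.Adj (z κ) a ∧ G.Adj (z κ) b :=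
    fun κ hκ => hp.exists_adj_adj_of_adj hfree hI hcard₂ hImax hu (hpz κ) fun hzQ =>
      (mem_sdiff.mp hκ).2 (hzc κ ▸ mem_image_of_mem c (mem_erase.mpr ⟨(hpz κ).ne.symm, hzQ⟩))
  have hJ : #(univ \ C) * (ℓ + 1) + 1 < #I := by
    have := Nat.mul_le_mul_right (ℓ + 1) ((card_le_univ (univ \ C)).trans (Fintype.card_fin _).le)
    omega
  obtain ⟨u', hu'I, hu'u, hzQ'⟩ :=
    exists_forall_adj_closedPrivateNeighborFinset hfree hI hcard₂ _ z hz hJ u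
  have hpQ' : p ∉ Q u' := fun h =>
    (compl_adj_of_mem_closedPrivateNeighborFinset hfree hI hcard₂ hu hu'I hu'u.symm hpQ h).ne rfl
  -- a colour `κ` missing on `Q u - p` cannot occur on `Q u'`, which `z κ` (coloured `κ`) dominates
  have hcQ' : ∀ x ∈ Q u', c x ∈ C := fun x hx => by_contra fun hκ =>
    hc _ x (hzQ' (c x) (mem_sdiff.mpr ⟨mem_univ _, hκ⟩) x hx) (hpz _).ne.symm
      (ne_of_mem_of_not_mem hx hpQ') (hzc _)
  refine ⟨u', hu'I, ?_⟩
  calc #(Q u') ≤ #((Q u).erase p) := hc.card_le_of_image_subset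
        (isClique_closedPrivateNeighborFinset hfree hI (by omega) hu'I) hpQ'
        (image_subset_iff.mpr hcQ')
    _ < #(Q u) := card_erase_lt_of_mem hpQ

theorem card_le_of_isIndepSet_of_forall_exists_adj (hfree : HFree (P3PlusP1 ℓ) G)
    (hcrit : VertexCritical G k) (hk : 2 ≤ k) (hI : G.IsIndepSet I)
    (hImax : ∀ x ∉ I, ∃ y ∈ I, G.Adj x y) : #I ≤ (k - 1) * (ℓ + 1) + 1 := by
  by_contra! hcard
  obtain ⟨u, hu, hmin⟩ := I.exists_min_image (fun u => #(G.closedPrivateNeighborFinset I u))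
    (card_pos.mp (by omega))
  obtain ⟨p, hp⟩ := exists_isPrivateNeighbor hfree hcrit hk hI (by nlinarith) hu
  obtain ⟨u', hu', hlt⟩ :=
    exists_card_closedPrivateNeighborFinset_lt hfree hcrit hk hI hImax hcard hu hp
  exact (hmin u' hu').not_gt hlt

end Fintype

end SimpleGraph

lemma indepNumber_eq_indepNum {V : Type*} [Fintype V] (G : SimpleGraph V) :
    indepNumber V G = G.indepNum := by
  classical
  unfold indepNumber indepNum
  congr 1
  ext n
  constructor
  · rintro ⟨S, hS, rfl⟩
    exact ⟨S.toFinset, by simpa using hS, (Set.ncard_eq_toFinset_card' S).symm⟩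
  · rintro ⟨s, hs⟩
    exact ⟨s, hs.isIndepSet, by simp [hs.card_eq]⟩

theorem stmt0 (k ℓ : ℕ) (hk : 3 ≤ k) (V : Type*) [Fintype V] (G : SimpleGraph V)
    (hcrit : VertexCritical G k) (hfree : HFree (P3PlusP1 ℓ) G) :
    indepNumber V G < (k - 1) ^ 2 * (ℓ + 3) := by
  obtain ⟨I, hI⟩ := G.maximumIndepSet_exists
  have hα : indepNumber V G ≤ (k - 1) * (ℓ + 1) + 1 := by
    rw [indepNumber_eq_indepNum, ← maximumIndepSet_card_eq_indepNum I hI]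
    exact card_le_of_isIndepSet_of_forall_exists_adj hfree hcrit (by omega) hI.isIndepSet
      fun x hx => exists_adj_of_maximal_isIndepSet (hI.isMaximalIndepSet I) hx
  have hk₁ : 1 ≤ k - 1 := by omega
  generalize k - 1 = n at hα hk₁ ⊢
  nlinarith
end

section
/- Let ℓ ≥ 0, let G be a finite simple (P3+ℓP1)-free graph, and let S be an independent set of G with |S| ≥ ℓ+1. If s ∈ S and a1, a2 are vertices outside S such that each of a1 and a2 is adjacent to s and to no other vertex of S, then a1 and a2 are adjacent. (Equivalently, the set of vertices whose unique neighbor in S is s induces a clique.) -/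
open SimpleGraph

/-- `S` is an independent (stable) set of `G`. -/
def IndepSet {V : Type*} (G : SimpleGraph V) (S : Set V) : Prop :=
  S.Pairwise (fun a b => ¬ G.Adj a b)

theorem stmt2 (ℓ : ℕ) (V : Type*) [Fintype V] (G : SimpleGraph V)
    (hfree : HFree (P3PlusP1 ℓ) G) (S : Set V) (hS : IndepSet G S)
    (hScard : ℓ + 1 ≤ S.ncard) (s : V) (hs : s ∈ S) (a₁ a₂ : V)
    (ha₁ : a₁ ∉ S) (ha₂ : a₂ ∉ S) (hne : a₁ ≠ a₂)
    (ha₁s : G.Adj a₁ s) (ha₂s : G.Adj a₂ s)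
    (ha₁only : ∀ t ∈ S, t ≠ s → ¬ G.Adj a₁ t)
    (ha₂only : ∀ t ∈ S, t ≠ s → ¬ G.Adj a₂ t) :
    G.Adj a₁ a₂ := by
  classical
  by_contra hadj
  have hSfin : S.Finite := Set.toFinite S
  have hcard : ℓ ≤ (S \ {s}).ncard := by
    have h1 : (S \ {s}).ncard + 1 = S.ncard :=
      Set.ncard_diff_singleton_add_one hs hSfin
    omega
  obtain ⟨T, hTsub, hTcard⟩ := Set.exists_subset_card_eq hcard
  have hTfin : T.Finite := Set.toFinite T
  have : Fintype T := hTfin.fintype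
  have hcardT : Fintype.card T = ℓ := by
    rw [← hTcard, Set.ncard_eq_toFinset_card']
    simp [Set.toFinset_card]
  let e : Fin ℓ ≃ T := (Fintype.equivFinOfCardEq hcardT).symm
  -- facts about elements of T
  have hTmem : ∀ i : Fin ℓ, (e i : V) ∈ S ∧ (e i : V) ≠ s := by
    intro i
    have := hTsub (e i).2
    exact ⟨this.1, this.2⟩
  let f : Fin 3 ⊕ Fin ℓ → V := Sum.elim (![a₁, s, a₂]) (fun i => (e i : V))
  have hinj : Function.Injective f := by
    have hs1 : a₁ ≠ s := G.ne_of_adj ha₁s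
    have hs2 : a₂ ≠ s := G.ne_of_adj ha₂s
    rintro (x | x) (y | y) hxy
    · simp only [f, Sum.elim_inl] at hxy
      fin_cases x <;> fin_cases y <;> simp_all
    · exfalso
      simp only [f, Sum.elim_inl, Sum.elim_inr] at hxy
      obtain ⟨hmem, hnes⟩ := hTmem y
      fin_cases x <;> simp at hxy <;> subst hxy
      · exact ha₁ hmem
      · exact hnes rfl
      · exact ha₂ hmem
    · exfalso
      simp only [f, Sum.elim_inl, Sum.elim_inr] at hxy
      obtain ⟨hmem, hnes⟩ := hTmem x
      fin_cases y <;> simp at hxy <;> subst hxy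
      · exact ha₁ hmem
      · exact hnes rfl
      · exact ha₂ hmem
    · simp only [f, Sum.elim_inr] at hxy
      exact congrArg Sum.inr (e.injective (Subtype.ext hxy))
  have hadjiff : ∀ x y, G.Adj (f x) (f y) ↔ (P3PlusP1 ℓ).Adj x y := by
    rintro (x | x) (y | y)
    · simp only [f, Sum.elim_inl, P3PlusP1, SimpleGraph.sum_adj, pathGraph_adj]
      fin_cases x <;> fin_cases y <;>
        simp_all [G.adj_comm a₂ a₁, ha₁s.symm, ha₂s.symm]
    · obtain ⟨hmem, hnes⟩ := hTmem y
      simp only [f, Sum.elim_inl, Sum.elim_inr, P3PlusP1, SimpleGraph.sum_adj]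
      constructor
      · intro h
        exfalso
        fin_cases x <;> simp at h
        · exact ha₁only _ hmem hnes h
        · exact hS hs hmem (Ne.symm hnes) h
        · exact ha₂only _ hmem hnes h
      · intro h; exact h.elim
    · obtain ⟨hmem, hnes⟩ := hTmem x
      simp only [f, Sum.elim_inl, Sum.elim_inr, P3PlusP1, SimpleGraph.sum_adj]
      constructor
      · intro h
        exfalso
        fin_cases y <;> simp at h
        · exact ha₁only _ hmem hnes h.symm
        · exact hS hmem hs hnes h
        · exact ha₂only _ hmem hnes h.symm
      · intro h; exact h.elim
    · obtain ⟨hmx, _⟩ := hTmem x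
      obtain ⟨hmy, _⟩ := hTmem y
      simp only [f, Sum.elim_inr, P3PlusP1, SimpleGraph.sum_adj]
      constructor
      · intro h
        exact absurd h (hS hmx hmy (fun hh => G.ne_of_adj h hh))
      · intro h; simp at h
  exact hfree.false ⟨⟨f, hinj⟩, fun {x y} => hadjiff x y⟩
end

section
/- Let ℓ ≥ 0, let G be a finite simple (P3+ℓP1)-free graph, and let S be an independent set of G with |S| ≥ ℓ+2. If x and y are distinct vertices of S, a1 is a vertex outside S adjacent to x and to no other vertex of S, and a2 is a vertex outside S adjacent to y and to no other vertex of S, then a1 and a2 are not adjacent. -/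
open SimpleGraph

theorem stmt3 (ℓ : ℕ) (V : Type*) [Fintype V] (G : SimpleGraph V)
    (hfree : HFree (P3PlusP1 ℓ) G) (S : Set V) (hS : IndepSet G S)
    (hScard : ℓ + 2 ≤ S.ncard) (x y : V) (hx : x ∈ S) (hy : y ∈ S) (hxy : x ≠ y)
    (a₁ a₂ : V) (ha₁ : a₁ ∉ S) (ha₂ : a₂ ∉ S)
    (ha₁x : G.Adj a₁ x) (ha₂y : G.Adj a₂ y)
    (ha₁only : ∀ t ∈ S, t ≠ x → ¬ G.Adj a₁ t)
    (ha₂only : ∀ t ∈ S, t ≠ y → ¬ G.Adj a₂ t) :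
    ¬ G.Adj a₁ a₂ := by
  classical
  intro hadj
  have ha12 : a₁ ≠ a₂ := by
    rintro rfl
    exact ha₁only y hy hxy.symm ha₂y
  -- pick ℓ vertices in S \ {x, y}
  have hcard : ℓ ≤ (S \ {x, y}).ncard := by
    have h1 : S.ncard ≤ (S \ {x, y}).ncard + ({x, y} : Set V).ncard :=
      Set.ncard_le_ncard_diff_add_ncard S {x, y}
    have h2 : ({x, y} : Set V).ncard ≤ 2 :=
      le_trans (Set.ncard_insert_le _ _) (by simp)
    omega
  obtain ⟨g⟩ : Nonempty (Fin ℓ ↪ ↥(S \ {x, y})) := by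
    apply Function.Embedding.nonempty_of_card_le
    rw [Fintype.card_fin]
    rw [← Nat.card_coe_set_eq, Nat.card_eq_fintype_card] at hcard
    exact hcard.trans_eq (by convert rfl)
  have hgS : ∀ i : Fin ℓ, (g i : V) ∈ S := fun i => (g i).2.1
  have hgx : ∀ i : Fin ℓ, (g i : V) ≠ x := fun i h => (g i).2.2 (by simp [h])
  have hgy : ∀ i : Fin ℓ, (g i : V) ≠ y := fun i h => (g i).2.2 (by simp [h])
  have ha₂x : ¬ G.Adj a₂ x := ha₂only x hx hxy
  have ha₁S : ∀ i : Fin ℓ, ¬ G.Adj a₁ (g i) := fun i => ha₁only _ (hgS i) (hgx i)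
  have ha₂S : ∀ i : Fin ℓ, ¬ G.Adj a₂ (g i) := fun i => ha₂only _ (hgS i) (hgy i)
  have hxS : ∀ i : Fin ℓ, ¬ G.Adj x (g i) := fun i => hS hx (hgS i) (Ne.symm (hgx i))
  have ha₁x' : a₁ ≠ x := fun h => ha₁ (h ▸ hx)
  have ha₂x' : a₂ ≠ x := fun h => ha₂ (h ▸ hx)
  let f : Fin 3 ⊕ Fin ℓ → V := Sum.elim ![x, a₁, a₂] (fun i => (g i : V))
  have hinj : Function.Injective f := by
    rintro (i | i) (j | j) h
    · simp only [f, Sum.elim_inl] at h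
      fin_cases i <;> fin_cases j <;> simp_all [Matrix.cons_val_zero, Matrix.cons_val_one] <;>
        first
          | rfl
          | exact absurd h ha₁x' | exact absurd h.symm ha₁x'
          | exact absurd h ha₂x' | exact absurd h.symm ha₂x'
          | exact absurd h ha12 | exact absurd h.symm ha12
          | exact absurd h (G.ne_of_adj ha₁x).symm
          | exact absurd h.symm (G.ne_of_adj ha₁x).symm
    · exfalso
      simp only [f, Sum.elim_inl, Sum.elim_inr] at h
      fin_cases i
      all_goals simp [Fin.isValue] at h
      · exact hgx j h.symm
      · exact ha₁ (h.symm ▸ hgS j)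
      · exact ha₂ (h.symm ▸ hgS j)
    · exfalso
      simp only [f, Sum.elim_inl, Sum.elim_inr] at h
      fin_cases j
      all_goals simp [Fin.isValue] at h
      · exact hgx i h
      · exact ha₁ (h ▸ hgS i)
      · exact ha₂ (h ▸ hgS i)
    · simp only [f, Sum.elim_inr] at h
      exact congrArg Sum.inr (g.injective (Subtype.val_injective h))
  refine hfree.false ⟨⟨f, hinj⟩, ?_⟩
  rintro (i | i) (j | j)
  · simp only [f, Function.Embedding.coeFn_mk, Sum.elim_inl, P3PlusP1, SimpleGraph.sum_adj]
    fin_cases i <;> fin_cases j <;>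
      simp_all [pathGraph_adj, G.adj_comm a₁ x, G.adj_comm a₂ x, G.adj_comm a₂ a₁,
        G.irrefl]
  · simp only [f, Function.Embedding.coeFn_mk, Sum.elim_inl, Sum.elim_inr, P3PlusP1,
      SimpleGraph.sum_adj]
    fin_cases i
    · simpa using hxS j
    · simpa using ha₁S j
    · simpa using ha₂S j
  · simp only [f, Function.Embedding.coeFn_mk, Sum.elim_inl, Sum.elim_inr, P3PlusP1,
      SimpleGraph.sum_adj]
    fin_cases j
    · simpa using fun h => hxS i h.symm
    · simpa using fun h => ha₁S i h.symm
    · simpa using fun h => ha₂S i h.symm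
  · simp only [f, Function.Embedding.coeFn_mk, Sum.elim_inr, P3PlusP1, SimpleGraph.sum_adj]
    constructor
    · intro h
      exfalso
      by_cases hij : i = j
      · subst hij; exact G.irrefl h
      · exact hS (hgS i) (hgS j) (fun e => hij (g.injective (Subtype.val_injective e))) h
    · intro h; simp at h
end

section
/- Let k ≥ 3 and ℓ ≥ 0, let G be a finite simple graph that is k-vertex-critical and (P3+ℓP1)-free, and let S be a maximum independent set of G with |S| ≥ (k−1)²·(ℓ+3). Then there exists a vertex of G outside S that has at least two neighbors in S. -/
/-! Suppose every vertex outside `S` has at most one neighbour in `S`. Then for each `s ∈ S`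
the closed neighbourhood `{s} ∪ N(s)` is closed under adjacency: an edge `uv` leaving it with
`u ∼ s` would give an induced path `s – u – v`, and `S` minus `s` and the (at most one)
`S`-neighbour of `v` still has `ℓ` vertices, all nonadjacent to the path. Hence two vertices of
`S` lie in different components. But a vertex-critical graph is connected: each component misses
some vertex `x`, so it can be coloured like `G - x`, which would colour `G` with `k - 1` colours. -/

open SimpleGraph

section

variable {V α β : Type*} {G : SimpleGraph V}

namespace SimpleGraph

def Embedding.sumElim {A : SimpleGraph α} {B : SimpleGraph β} (f : A ↪g G) (g : B ↪g G)
    (hne : ∀ a b, f a ≠ g b) (hadj : ∀ a b, ¬G.Adj (f a) (g b)) : A ⊕g B ↪g G where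
  toFun := Sum.elim f g
  inj' := by
    rintro (a | b) (a' | b') h <;>
      simp_all [f.injective.eq_iff, g.injective.eq_iff, (hne _ _).symm]
  map_rel_iff' := by
    intro x y
    change G.Adj (Sum.elim f g x) (Sum.elim f g y) ↔ _
    rcases x with a | b <;> rcases y with a' | b' <;>
      simp [hadj, fun a b => mt G.adj_symm (hadj a b)]

def Embedding.botOfIsIndepSet (f : β ↪ V) (hf : G.IsIndepSet (Set.range f)) :
    (⊥ : SimpleGraph β) ↪g G where
  toEmbedding := f
  map_rel_iff' := by
    intro a b
    simp only [bot_adj, iff_false]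
    intro h
    exact hf (Set.mem_range_self a) (Set.mem_range_self b) h.ne h

def pathGraph3Embedding {a b c : V} (hab : G.Adj a b) (hbc : G.Adj b c) (hac : ¬G.Adj a c)
    (hne : a ≠ c) : pathGraph 3 ↪g G where
  toFun := ![a, b, c]
  inj' := by
    intro i j h
    fin_cases i <;> fin_cases j <;> simp_all [hab.ne, hbc.ne, hab.ne.symm, hbc.ne.symm, hne.symm]
  map_rel_iff' := by
    intro i j
    change G.Adj (![a, b, c] i) (![a, b, c] j) ↔ _
    fin_cases i <;> fin_cases j <;>
      simp [pathGraph_adj, hab, hbc, hab.symm, hbc.symm, hac, mt G.adj_symm hac]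

theorem Preconnected.mem_of_adj_closed (hG : G.Preconnected) {A : Set V}
    (hA : ∀ u v, u ∈ A → G.Adj u v → v ∈ A) {a : V} (ha : a ∈ A) (b : V) : b ∈ A := by
  by_contra hb
  obtain ⟨p⟩ := hG a b
  obtain ⟨d, -, hd, hd'⟩ := p.exists_boundary_dart A ha hb
  exact hd' (hA _ _ hd d.adj)

end SimpleGraph

theorem Set.Finite.nonempty_fin_embedding_of_le_ncard {D : Set α} (hD : D.Finite)
    {n : ℕ} (hn : n ≤ D.ncard) : Nonempty (Fin n ↪ D) := by
  have := hD.fintype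
  apply Function.Embedding.nonempty_of_card_le
  rwa [Fintype.card_fin, ← Set.toFinset_card, ← Set.ncard_eq_toFinset_card']

theorem not_hFree_P3PlusP1 {ℓ : ℕ} {a b c : V} (hab : G.Adj a b) (hbc : G.Adj b c)
    (hac : ¬G.Adj a c) (hne : a ≠ c) {D : Set V}
    (hD : G.IsIndepSet D) (hDfin : D.Finite) (hℓ : ℓ ≤ D.ncard)
    (hsep : ∀ x ∈ ({a, b, c} : Set V), ∀ d ∈ D, x ≠ d ∧ ¬G.Adj x d) :
    ¬HFree (P3PlusP1 ℓ) G := by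
  obtain ⟨e⟩ := hDfin.nonempty_fin_embedding_of_le_ncard hℓ
  have hrange : G.IsIndepSet (Set.range (e.trans (Function.Embedding.subtype _))) :=
    Set.Pairwise.mono (by rintro _ ⟨i, rfl⟩; exact (e i).2) hD
  have hpath : ∀ i, ![a, b, c] i ∈ ({a, b, c} : Set V) := by
    intro i; fin_cases i <;> simp
  intro hfree
  exact hfree.false <| (pathGraph3Embedding hab hbc hac hne).sumElim
    (Embedding.botOfIsIndepSet _ hrange) (fun i j => (hsep _ (hpath i) _ (e j).2).1)
    (fun i j => (hsep _ (hpath i) _ (e j).2).2)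

theorem VertexCritical.colorable_induce_compl_singleton {k : ℕ} (h : VertexCritical G k)
    (x : V) : (G.induce {x}ᶜ).Colorable (k - 1) :=
  chromaticNumber_le_iff_colorable.1 <| by
    rw [ENat.natCast_sub, Nat.cast_one]
    exact ENat.le_sub_one_of_lt (h.2 x)

theorem VertexCritical.preconnected {k : ℕ} (h : VertexCritical G k) : G.Preconnected := by
  intro u v
  by_contra huv
  have hcol : G.Colorable (k - 1) := colorable_iff_forall_connectedComponent.2 fun C => by
    obtain ⟨x, hx⟩ : ∃ x, x ∉ C.supp := by
      by_cases hu : u ∈ C.supp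
      · exact ⟨v, fun hv => huv (C.reachable_of_mem_supp hu hv)⟩
      · exact ⟨u, hu⟩
    exact (h.colorable_induce_compl_singleton x).of_hom
      (G.induceHomOfLE fun y hy (hyx : y = x) => hx (hyx ▸ hy)).toHom
  have hk : k ≤ k - 1 := by exact_mod_cast h.1 ▸ hcol.chromaticNumber_le
  obtain rfl : k = 0 := by omega
  exact absurd (h.2 u) (by simp)

section FewNeighbours

variable {ℓ : ℕ} {S : Set V}

theorem adj_of_adj_of_adj_of_hFree (hS : G.IsIndepSet S) (hfree : HFree (P3PlusP1 ℓ) G)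
    (hcard : ℓ + 2 ≤ S.ncard) (hfew : ∀ b ∉ S, {s ∈ S | G.Adj b s}.Subsingleton)
    {s u v : V} (hs : s ∈ S) (hv : v ∉ S) (hsu : G.Adj s u) (huv : G.Adj u v) :
    G.Adj s v := by
  by_contra hsv
  have hu : u ∉ S := fun hu => hS hs hu hsu.ne hsu
  have hSfin : S.Finite := Set.finite_of_ncard_pos (by omega)
  set E := insert s {t ∈ S | G.Adj v t}
  have hE : E.ncard ≤ 2 := by
    have : Finite {t ∈ S | G.Adj v t} := (hSfin.subset (Set.sep_subset _ _)).to_subtype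
    have := Set.ncard_le_one_iff_subsingleton.2 (hfew v hv)
    exact (Set.ncard_insert_le _ _).trans (by omega)
  refine not_hFree_P3PlusP1 hsu huv hsv (ne_of_mem_of_not_mem hs hv) (D := S \ E)
    (Set.Pairwise.mono Set.sdiff_subset hS) hSfin.sdiff
    (by have := Set.le_ncard_sdiff E S ((hSfin.subset (Set.sep_subset _ _)).insert s); omega)
    ?_ hfree
  rintro x hx d ⟨hdS, hdE⟩
  have hds : d ≠ s := fun h => hdE (Or.inl h)
  have hvd : ¬G.Adj v d := fun h => hdE (Or.inr ⟨hdS, h⟩)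
  simp only [Set.mem_insert_iff, Set.mem_singleton_iff] at hx
  rcases hx with rfl | rfl | rfl
  · exact ⟨hds.symm, hS hs hdS hds.symm⟩
  · exact ⟨(ne_of_mem_of_not_mem hdS hu).symm,
      fun hxd => hds (hfew x hu ⟨hdS, hxd⟩ ⟨hs, hsu.symm⟩)⟩
  · exact ⟨(ne_of_mem_of_not_mem hdS hv).symm, hvd⟩

theorem mem_insert_neighborSet_of_adj (hS : G.IsIndepSet S) (hfree : HFree (P3PlusP1 ℓ) G)
    (hcard : ℓ + 2 ≤ S.ncard) (hfew : ∀ b ∉ S, {s ∈ S | G.Adj b s}.Subsingleton)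
    {s u v : V} (hs : s ∈ S) (hu : u ∈ insert s (G.neighborSet s)) (huv : G.Adj u v) :
    v ∈ insert s (G.neighborSet s) := by
  rcases hu with rfl | hsu
  · exact Or.inr huv
  have hu : u ∉ S := fun hu => hS hs hu hsu.ne hsu
  by_cases hv : v ∈ S
  · exact Or.inl (hfew u hu ⟨hv, huv⟩ ⟨hs, hsu.symm⟩)
  · exact Or.inr (adj_of_adj_of_adj_of_hFree hS hfree hcard hfew hs hv hsu huv)

theorem not_preconnected_of_hFree (hS : G.IsIndepSet S) (hfree : HFree (P3PlusP1 ℓ) G)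
    (hcard : ℓ + 2 ≤ S.ncard) (hfew : ∀ b ∉ S, {s ∈ S | G.Adj b s}.Subsingleton) :
    ¬G.Preconnected := by
  intro hG
  obtain ⟨s, t, hs, ht, hst⟩ :=
    (Set.one_lt_ncard_iff (Set.finite_of_ncard_pos (by omega))).1 (by omega : 1 < S.ncard)
  have hclosed : ∀ u v, u ∈ insert s (G.neighborSet s) → G.Adj u v →
      v ∈ insert s (G.neighborSet s) := fun _ _ hu huv =>
    mem_insert_neighborSet_of_adj hS hfree hcard hfew hs hu huv
  rcases hG.mem_of_adj_closed hclosed (Set.mem_insert s _) t with hts | hst'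
  · exact hst hts.symm
  · exact hS hs ht hst hst'

end FewNeighbours

end

theorem stmt4_general (k ℓ : ℕ) (hk : 3 ≤ k) (V : Type*) (G : SimpleGraph V)
    (hcrit : VertexCritical G k) (hfree : HFree (P3PlusP1 ℓ) G)
    (S : Set V) (hS : IndepSet G S)
    (hScard : (k - 1) ^ 2 * (ℓ + 3) ≤ S.ncard) :
    ∃ b : V, b ∉ S ∧ 2 ≤ {s ∈ S | G.Adj b s}.ncard := by
  by_contra! hfew
  have hcard : ℓ + 2 ≤ S.ncard := calc
    ℓ + 2 ≤ 1 * (ℓ + 3) := by omega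
    _ ≤ (k - 1) ^ 2 * (ℓ + 3) := Nat.mul_le_mul_right _ (Nat.one_le_pow _ _ (by omega))
    _ ≤ S.ncard := hScard
  have hSfin : S.Finite := Set.finite_of_ncard_pos (by omega)
  refine not_preconnected_of_hFree hS hfree hcard (fun b hb => ?_) hcrit.preconnected
  have : Finite {s ∈ S | G.Adj b s} := (hSfin.subset (Set.sep_subset _ _)).to_subtype
  exact Set.ncard_le_one_iff_subsingleton.1 (by have := hfew b hb; omega)

theorem stmt4 (k ℓ : ℕ) (hk : 3 ≤ k) (V : Type*) [Fintype V] (G : SimpleGraph V)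
    (hcrit : VertexCritical G k) (hfree : HFree (P3PlusP1 ℓ) G)
    (S : Set V) (hS : IndepSet G S) (hmax : ∀ T : Set V, IndepSet G T → T.ncard ≤ S.ncard)
    (hScard : (k - 1) ^ 2 * (ℓ + 3) ≤ S.ncard) :
    ∃ b : V, b ∉ S ∧ 2 ≤ {s ∈ S | G.Adj b s}.ncard :=
  stmt4_general k ℓ hk V G hcrit hfree S hS hScard
end

section
/- Let k ≥ 3 and ℓ ≥ 0, let G be a finite simple (P3+ℓP1)-free graph, let S be an independent set of G, and let c be a proper coloring of G. If b is a vertex outside S having at least two neighbors in S, then the color class of c containing b contains fewer than (k−1)·(ℓ+3) vertices of S. -/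
open SimpleGraph

theorem stmt7 (k ℓ : ℕ) (hk : 3 ≤ k) (V : Type*) [Fintype V] (G : SimpleGraph V)
    (hfree : HFree (P3PlusP1 ℓ) G) (S : Set V) (hS : IndepSet G S)
    (α : Type*) (c : G.Coloring α) (b : V) (hb : b ∉ S)
    (hnbrs : 2 ≤ {s ∈ S | G.Adj b s}.ncard) :
    {s ∈ S | c s = c b}.ncard < (k - 1) * (ℓ + 3) := by
  classical
  -- extract two distinct neighbors of b in S
  obtain ⟨s1, s2, hs1, hs2, hne⟩ :
      ∃ a b', a ∈ {s ∈ S | G.Adj b s} ∧ b' ∈ {s ∈ S | G.Adj b s} ∧ a ≠ b' :=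
    (Set.one_lt_ncard_iff (Set.toFinite _)).mp (by omega)
  obtain ⟨hs1S, hs1adj⟩ := hs1
  obtain ⟨hs2S, hs2adj⟩ := hs2
  set T : Set V := {s ∈ S | c s = c b} with hT
  by_contra hcon
  push_neg at hcon
  -- basic facts about elements of T
  have hTfacts : ∀ x ∈ T, x ∈ S ∧ ¬ G.Adj b x ∧ x ≠ b ∧ x ≠ s1 ∧ x ≠ s2 ∧
      ¬ G.Adj s1 x ∧ ¬ G.Adj s2 x := by
    intro x hx
    obtain ⟨hxS, hxc⟩ := hx
    have hnadj : ¬ G.Adj b x := fun h => (c.valid h) (by rw [hxc])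
    have hx1 : x ≠ s1 := by
      rintro rfl; exact (c.valid hs1adj) (by rw [hxc])
    have hx2 : x ≠ s2 := by
      rintro rfl; exact (c.valid hs2adj) (by rw [hxc])
    exact ⟨hxS, hnadj, fun h => hb (h ▸ hxS), hx1, hx2,
      hS hs1S hxS (Ne.symm hx1), hS hs2S hxS (Ne.symm hx2)⟩
  -- find ℓ distinct elements in T
  have hk2 : 2 ≤ k - 1 := by omega
  have hl : ℓ ≤ T.ncard := le_trans (by nlinarith) hcon
  obtain ⟨T', hT'sub, hT'card⟩ := Set.exists_subset_card_eq hl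
  have hT'fin : T'.Finite := Set.toFinite _
  have hcard : hT'fin.toFinset.card = ℓ := by
    rw [← Set.ncard_eq_toFinset_card T' hT'fin]; exact hT'card
  let e : Fin ℓ → V := fun i => (hT'fin.toFinset.equivFin.symm (Fin.cast hcard.symm i) : V)
  have heT : ∀ i, e i ∈ T := by
    intro i
    exact hT'sub (hT'fin.mem_toFinset.mp (hT'fin.toFinset.equivFin.symm _).2)
  have heinj : Function.Injective e := by
    intro i j h
    have := Subtype.ext h
    have := (hT'fin.toFinset.equivFin.symm.injective this)
    simpa [Fin.ext_iff] using congrArg Fin.val this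
  -- define the embedding
  let m : Fin 3 → V := ![s1, b, s2]
  let g : Fin 3 ⊕ Fin ℓ → V := Sum.elim m e
  have hmne : ∀ (i : Fin 3) (x : Fin ℓ), m i ≠ e x := by
    intro i x
    obtain ⟨_, _, hxb, hx1, hx2, _, _⟩ := hTfacts _ (heT x)
    fin_cases i <;> simp [m] <;> [exact fun h => hx1 h.symm;
      exact fun h => hxb h.symm; exact fun h => hx2 h.symm]
  have hs1b : s1 ≠ b := G.ne_of_adj hs1adj.symm
  have hs2b : s2 ≠ b := G.ne_of_adj hs2adj.symm
  have hminj : Function.Injective m := by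
    intro i j h
    fin_cases i <;> fin_cases j <;> simp_all [m] <;>
      first
      | rfl
      | exact absurd h hs1b | exact absurd h hne | exact absurd h.symm hs1b
      | exact absurd h hs2b.symm | exact absurd h.symm hne | exact absurd h hs2b
      | exact absurd h.symm hs2b
  have hginj : Function.Injective g := by
    rintro (i | i) (j | j) h
    · exact congrArg Sum.inl (hminj h)
    · exact absurd h (hmne i j)
    · exact absurd h.symm (hmne j i)
    · exact congrArg Sum.inr (heinj h)
  have hs12 : ¬ G.Adj s1 s2 := hS hs1S hs2S hne
  have hmap : ∀ x y, (P3PlusP1 ℓ).Adj x y ↔ G.Adj (g x) (g y) := by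
    rintro (i | i) (j | j)
    · constructor
      · intro h
        have h' : (pathGraph 3).Adj i j := h
        rw [pathGraph_adj] at h'
        fin_cases i <;> fin_cases j <;> simp_all [g, m] <;>
          first
          | exact hs1adj.symm | exact hs1adj | exact hs2adj | exact hs2adj.symm
      · intro h
        show (pathGraph 3).Adj i j
        rw [pathGraph_adj]
        fin_cases i <;> fin_cases j <;> simp_all [g, m] <;>
          first
          | exact absurd h (G.irrefl)
          | exact absurd h hs12 | exact absurd h (fun h' => hs12 h'.symm)
          | exact absurd h hs1adj.elim
    · simp only [P3PlusP1, SimpleGraph.sum_adj]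
      obtain ⟨_, hnadj, _, _, _, h1, h2⟩ := hTfacts _ (heT j)
      constructor
      · intro h; exact h.elim
      · intro h
        exfalso
        revert h
        fin_cases i <;> simp [g, m] <;> [exact h1; exact hnadj; exact h2]
    · simp only [P3PlusP1, SimpleGraph.sum_adj]
      obtain ⟨_, hnadj, _, _, _, h1, h2⟩ := hTfacts _ (heT i)
      constructor
      · intro h; exact h.elim
      · intro h
        exfalso
        revert h
        fin_cases j <;> simp [g, m] <;>
          [exact fun h => h1 h.symm; exact fun h => hnadj h.symm; exact fun h => h2 h.symm]
    · simp only [P3PlusP1, SimpleGraph.sum_adj]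
      constructor
      · intro h; exact h.elim
      · intro h
        rcases eq_or_ne i j with rfl | hij
        · exact G.irrefl h
        · exact hS (hTfacts _ (heT i)).1 (hTfacts _ (heT j)).1
            (fun hh => hij (heinj hh)) h
  exact hfree.false ⟨⟨g, hginj⟩, fun {x y} => (hmap x y).symm⟩
end

section
/- Let G be a graph in the class H* with partition A1,...,A6 and χ(G) = k, let {i,i′} = {1,4}, and let c be a proper k-coloring of G with colors {1,...,k}. Suppose j′ is a color that appears on A6 but not on A_i under c, and j is a color that appears on A_i but not on A6 under c. Then G has a proper k-coloring c′ that agrees with c on A2 ∪ A3 ∪ A6, such that j does not appear on A_i under c′ and j′ appears on A_i under c′ (and j′ still appears on A6 under c′). -/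
open SimpleGraph

/-- The co-gem: the disjoint union `P₄ + P₁`. -/
def cogem : SimpleGraph (Fin 4 ⊕ Fin 1) :=
  pathGraph 4 ⊕g (⊥ : SimpleGraph (Fin 1))

/-- The gem: the complement of the co-gem. -/
def gem : SimpleGraph (Fin 4 ⊕ Fin 1) := cogemᶜ

/-- `G` belongs to the class `ℋ` with the partition `A₁, …, A₆`. -/
structure ClassH {V : Type*} (G : SimpleGraph V) (A₁ A₂ A₃ A₄ A₅ A₆ : Set V) : Prop where
  gemFree : HFree gem G
  cogemFree : HFree cogem G
  ne₁ : A₁.Nonempty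
  ne₂ : A₂.Nonempty
  ne₃ : A₃.Nonempty
  ne₄ : A₄.Nonempty
  ne₅ : A₅.Nonempty
  ne₆ : A₆.Nonempty
  cover : A₁ ∪ A₂ ∪ A₃ ∪ A₄ ∪ A₅ ∪ A₆ = Set.univ
  disj : List.Pairwise Disjoint [A₁, A₂, A₃, A₄, A₅, A₆]
  comp₁ : ∀ x ∈ A₁, ∀ y ∈ A₂ ∪ A₅, G.Adj x y
  anti₁ : ∀ x ∈ A₁, ∀ y ∈ A₃ ∪ A₄ ∪ A₆, ¬ G.Adj x y
  comp₂ : ∀ x ∈ A₂, ∀ y ∈ A₁ ∪ A₃ ∪ A₆, G.Adj x y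
  anti₂ : ∀ x ∈ A₂, ∀ y ∈ A₄ ∪ A₅, ¬ G.Adj x y
  comp₃ : ∀ x ∈ A₃, ∀ y ∈ A₂ ∪ A₄ ∪ A₆, G.Adj x y
  anti₃ : ∀ x ∈ A₃, ∀ y ∈ A₁ ∪ A₅, ¬ G.Adj x y
  comp₄ : ∀ x ∈ A₄, ∀ y ∈ A₃ ∪ A₅, G.Adj x y
  anti₄ : ∀ x ∈ A₄, ∀ y ∈ A₁ ∪ A₂ ∪ A₆, ¬ G.Adj x y

/-- `G` belongs to the class `ℋ*`: it is in `ℋ` and `A₁, A₂, A₃, A₄` are cliques. -/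
structure ClassHStar {V : Type*} (G : SimpleGraph V) (A₁ A₂ A₃ A₄ A₅ A₆ : Set V)
    extends ClassH G A₁ A₂ A₃ A₄ A₅ A₆ : Prop where
  clique₁ : G.IsClique A₁
  clique₂ : G.IsClique A₂
  clique₃ : G.IsClique A₃
  clique₄ : G.IsClique A₄

/-!
If `j'` occurs on `A₅`, then, since `A₁` and `A₄` are complete to `A₅` and `A₂`, `A₃` are
complete to `A₆`, the set `A₁ ∪ A₄ ∪ A₅` is a union of `{j, j'}`-Kempe chains, and swapping `j`
and `j'` on it moves `j'` onto `Aᵢ` without touching `A₂ ∪ A₃ ∪ A₆`. Otherwise no neighbour of a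
vertex `v₀ ∈ Aᵢ` of colour `j` has colour `j'`, so `v₀` can be recoloured `j'`; as `Aᵢ` is a
clique, `v₀` was its only vertex of colour `j`.
-/

namespace SimpleGraph.Coloring

variable {V α : Type*} {G : SimpleGraph V}

theorem exists_recolor (c : G.Coloring α) (v : V) (a : α) (h : ∀ w, G.Adj v w → c w ≠ a) :
    ∃ c' : G.Coloring α, c' v = a ∧ ∀ w ≠ v, c' w = c w := by
  classical
  refine ⟨Coloring.mk (Function.update c v a) fun {u w} huw => ?_,
    by simp [Coloring.mk], fun w hw => by simp [Coloring.mk, hw]⟩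
  rcases eq_or_ne u v with rfl | hu
  · rw [Function.update_self, Function.update_of_ne (G.ne_of_adj huw).symm]
    exact (h w huw).symm
  rcases eq_or_ne w v with rfl | hw
  · rw [Function.update_self, Function.update_of_ne hu]
    exact h u huw.symm
  rw [Function.update_of_ne hu, Function.update_of_ne hw]
  exact c.valid huw

theorem exists_swap_on [DecidableEq α] (c : G.Coloring α) (a b : α) (S : Set V)
    (hab : ∀ u ∈ S, ∀ v ∉ S, G.Adj u v → c u = a → c v ≠ b)
    (hba : ∀ u ∈ S, ∀ v ∉ S, G.Adj u v → c u = b → c v ≠ a) :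
    ∃ c' : G.Coloring α, (∀ v ∈ S, c' v = Equiv.swap a b (c v)) ∧ ∀ v ∉ S, c' v = c v := by
  classical
  have boundary : ∀ u ∈ S, ∀ v ∉ S, G.Adj u v → Equiv.swap a b (c u) ≠ c v := by
    intro u hu v hv huv
    rcases eq_or_ne (c u) a with hua | hua
    · rw [hua, Equiv.swap_apply_left]
      exact (hab u hu v hv huv hua).symm
    rcases eq_or_ne (c u) b with hub | hub
    · rw [hub, Equiv.swap_apply_right]
      exact (hba u hu v hv huv hub).symm
    rw [Equiv.swap_apply_of_ne_of_ne hua hub]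
    exact c.valid huv
  refine ⟨Coloring.mk (fun v => if v ∈ S then Equiv.swap a b (c v) else c v)
    fun {u v} huv => ?_, fun v hv => if_pos hv, fun v hv => if_neg hv⟩
  by_cases hu : u ∈ S <;> by_cases hv : v ∈ S <;> simp only [hu, hv, if_true, if_false]
  · exact (Equiv.swap a b).injective.ne (c.valid huv)
  · exact boundary u hu v hv huv
  · exact (boundary v hv u hu huv.symm).symm
  · exact c.valid huv

end SimpleGraph.Coloring

namespace ClassH

variable {V : Type*} {G : SimpleGraph V} {A₁ A₂ A₃ A₄ A₅ A₆ : Set V}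

theorem compl_union_A₁_A₄_A₅ (hH : ClassH G A₁ A₂ A₃ A₄ A₅ A₆) :
    (A₁ ∪ A₄ ∪ A₅)ᶜ = A₂ ∪ A₃ ∪ A₆ := by
  have hcover := hH.cover
  have hdisj := hH.disj
  simp only [List.pairwise_cons, List.mem_cons, List.not_mem_nil, or_false, forall_eq_or_imp,
    forall_eq, Set.disjoint_left] at hdisj
  ext v
  have hv : v ∈ A₁ ∪ A₂ ∪ A₃ ∪ A₄ ∪ A₅ ∪ A₆ := hcover ▸ Set.mem_univ v
  simp only [Set.mem_union, Set.mem_compl_iff] at hv ⊢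
  grind

theorem mem_of_adj_of_mem_A₁_or_A₄ (hH : ClassH G A₁ A₂ A₃ A₄ A₅ A₆) {Ai : Set V}
    (hAi : Ai = A₁ ∨ Ai = A₄) {v w : V} (hv : v ∈ Ai) (hvw : G.Adj v w) :
    w ∈ Ai ∪ A₂ ∪ A₃ ∪ A₅ := by
  have hw : w ∈ A₁ ∪ A₄ ∪ A₅ ∨ w ∈ A₂ ∪ A₃ ∪ A₆ := by
    rw [← hH.compl_union_A₁_A₄_A₅]
    exact em _
  rcases hAi with rfl | rfl
  · have hanti := hH.anti₁ v hv w
    simp only [Set.mem_union] at hw hanti ⊢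
    tauto
  · have hanti := hH.anti₄ v hv w
    simp only [Set.mem_union] at hw hanti ⊢
    tauto

theorem adj_of_mem_A₁_or_A₄_of_mem_A₅ (hH : ClassH G A₁ A₂ A₃ A₄ A₅ A₆) {Ai : Set V}
    (hAi : Ai = A₁ ∨ Ai = A₄) {v w : V} (hv : v ∈ Ai) (hw : w ∈ A₅) : G.Adj v w := by
  rcases hAi with rfl | rfl
  exacts [hH.comp₁ v hv w (Or.inr hw), hH.comp₄ v hv w (Or.inr hw)]

theorem exists_swap_on_A₁_A₄_A₅ {α : Type*} [DecidableEq α] (hH : ClassH G A₁ A₂ A₃ A₄ A₅ A₆)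
    (c : G.Coloring α) {a b : α} (ha₅ : ∀ v ∈ A₅, c v ≠ a) (ha₆ : ∀ v ∈ A₆, c v ≠ a)
    (hb₂₃ : ∀ v ∈ A₂ ∪ A₃, c v ≠ b) {w : V} (hw : w ∈ A₅) (hcw : c w = b) :
    ∃ c' : G.Coloring α, (∀ v ∈ A₂ ∪ A₃ ∪ A₆, c' v = c v) ∧
      ∀ v ∈ A₁ ∪ A₄, c' v = Equiv.swap a b (c v) := by
  have hR := hH.compl_union_A₁_A₄_A₅
  have hab : ∀ u ∈ A₁ ∪ A₄ ∪ A₅, ∀ v ∉ A₁ ∪ A₄ ∪ A₅, G.Adj u v → c u = a → c v ≠ b := by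
    intro u hu v hv huv hcu hcv
    rw [← Set.mem_compl_iff, hR] at hv
    rcases hv with hv₂₃ | hv₆
    · exact hb₂₃ v hv₂₃ hcv
    rcases hu with (hu₁ | hu₄) | hu₅
    · exact hH.anti₁ u hu₁ v (Or.inr hv₆) huv
    · exact hH.anti₄ u hu₄ v (Or.inr hv₆) huv
    · exact ha₅ u hu₅ hcu
  have hba : ∀ u ∈ A₁ ∪ A₄ ∪ A₅, ∀ v ∉ A₁ ∪ A₄ ∪ A₅, G.Adj u v → c u = b → c v ≠ a := by
    intro u hu v hv huv hcu hcv
    rw [← Set.mem_compl_iff, hR] at hv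
    have hu₅ : u ∈ A₅ := by
      rcases hu with (hu₁ | hu₄) | hu₅
      · exact absurd (hcu.trans hcw.symm) (c.valid (hH.comp₁ u hu₁ w (Or.inr hw)))
      · exact absurd (hcu.trans hcw.symm) (c.valid (hH.comp₄ u hu₄ w (Or.inr hw)))
      · exact hu₅
    rcases hv with (hv₂ | hv₃) | hv₆
    · exact hH.anti₂ v hv₂ u (Or.inr hu₅) huv.symm
    · exact hH.anti₃ v hv₃ u (Or.inr hu₅) huv.symm
    · exact ha₆ v hv₆ hcv
  obtain ⟨c', hswap, hfix⟩ := c.exists_swap_on a b _ hab hba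
  exact ⟨c', fun v hv => hfix v (hR.symm ▸ hv : v ∈ (A₁ ∪ A₄ ∪ A₅)ᶜ),
    fun v hv => hswap v (Or.inl hv)⟩

end ClassH

namespace ClassHStar

variable {V : Type*} {G : SimpleGraph V} {A₁ A₂ A₃ A₄ A₅ A₆ : Set V}

theorem exists_recolor_of_mem_A₁_or_A₄ {α : Type*} (hH : ClassHStar G A₁ A₂ A₃ A₄ A₅ A₆)
    {Ai : Set V} (hAi : Ai = A₁ ∨ Ai = A₄) (c : G.Coloring α) {a b : α} (hab : a ≠ b) {v₀ : V}
    (hv₀ : v₀ ∈ Ai) (hcv₀ : c v₀ = a) (hbAi : ∀ v ∈ Ai, c v ≠ b)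
    (hb₂₃ : ∀ v ∈ A₂ ∪ A₃, c v ≠ b) (hb₅ : ∀ v ∈ A₅, c v ≠ b) :
    ∃ c' : G.Coloring α, (∀ v ∈ A₂ ∪ A₃ ∪ A₆, c' v = c v) ∧ (∀ v ∈ Ai, c' v ≠ a) ∧
      c' v₀ = b := by
  obtain ⟨c', hc'v₀, hfix⟩ := c.exists_recolor v₀ b fun w hv₀w => by
    rcases hH.mem_of_adj_of_mem_A₁_or_A₄ hAi hv₀ hv₀w with ((hw | hw) | hw) | hw
    exacts [hbAi w hw, hb₂₃ w (Or.inl hw), hb₂₃ w (Or.inr hw), hb₅ w hw]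
  have hv₀_fix : v₀ ∉ A₂ ∪ A₃ ∪ A₆ := by
    rw [← hH.compl_union_A₁_A₄_A₅, Set.notMem_compl_iff]
    rcases hAi with rfl | rfl
    exacts [Or.inl (Or.inl hv₀), Or.inl (Or.inr hv₀)]
  have hclique : G.IsClique Ai := by
    rcases hAi with rfl | rfl
    exacts [hH.clique₁, hH.clique₄]
  refine ⟨c', fun v hv => hfix v (ne_of_mem_of_not_mem hv hv₀_fix), fun v hv => ?_, hc'v₀⟩
  rcases eq_or_ne v v₀ with rfl | hvv₀
  · rw [hc'v₀]
    exact hab.symm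
  · rw [hfix v hvv₀]
    exact fun hcv => c.valid (hclique hv hv₀ hvv₀) (hcv.trans hcv₀.symm)

end ClassHStar

theorem stmt9_general (V : Type*) (G : SimpleGraph V) (A₁ A₂ A₃ A₄ A₅ A₆ : Set V)
    (hH : ClassHStar G A₁ A₂ A₃ A₄ A₅ A₆) (k : ℕ)
    (Ai : Set V) (hAi : Ai = A₁ ∨ Ai = A₄) (c : G.Coloring (Fin k)) (j j' : Fin k)
    (hj'on6 : ∃ v ∈ A₆, c v = j') (hj'noti : ¬ ∃ v ∈ Ai, c v = j')
    (hjoni : ∃ v ∈ Ai, c v = j) (hjnot6 : ¬ ∃ v ∈ A₆, c v = j) :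
    ∃ c' : G.Coloring (Fin k),
      (∀ v ∈ A₂ ∪ A₃ ∪ A₆, c' v = c v) ∧
      (∀ v ∈ Ai, c' v ≠ j) ∧ (∃ v ∈ Ai, c' v = j') ∧ (∃ v ∈ A₆, c' v = j') := by
  push Not at hj'noti hjnot6
  obtain ⟨y, hy, hcy⟩ := hj'on6
  obtain ⟨v₀, hv₀, hcv₀⟩ := hjoni
  have hj₅ : ∀ v ∈ A₅, c v ≠ j := fun v hv hcv =>
    c.valid (hH.adj_of_mem_A₁_or_A₄_of_mem_A₅ hAi hv₀ hv) (hcv₀.trans hcv.symm)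
  have hj'₂₃ : ∀ v ∈ A₂ ∪ A₃, c v ≠ j' := fun v hv hcv => c.valid (by
    rcases hv with hv | hv
    exacts [hH.comp₂ v hv y (Or.inr hy), hH.comp₃ v hv y (Or.inr hy)]) (hcv.trans hcy.symm)
  by_cases h₅ : ∃ w ∈ A₅, c w = j'
  · obtain ⟨w, hw, hcw⟩ := h₅
    obtain ⟨c', hfix, hswap⟩ := hH.exists_swap_on_A₁_A₄_A₅ c hj₅ hjnot6 hj'₂₃ hw hcw
    have hAi_sub : Ai ⊆ A₁ ∪ A₄ := by
      rcases hAi with rfl | rfl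
      exacts [Set.subset_union_left, Set.subset_union_right]
    refine ⟨c', hfix, fun v hv => ?_, ⟨v₀, hv₀, ?_⟩, y, hy, (hfix y (Or.inr hy)).trans hcy⟩
    · rw [hswap v (hAi_sub hv), Ne, Equiv.swap_apply_eq_iff, Equiv.swap_apply_left]
      exact hj'noti v hv
    · rw [hswap v₀ (hAi_sub hv₀), hcv₀, Equiv.swap_apply_left]
  · push Not at h₅
    have hjj' : j ≠ j' := fun hjj' => hjnot6 y hy (hcy.trans hjj'.symm)
    obtain ⟨c', hfix, hj, hc'v₀⟩ :=
      hH.exists_recolor_of_mem_A₁_or_A₄ hAi c hjj' hv₀ hcv₀ hj'noti hj'₂₃ h₅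
    exact ⟨c', hfix, hj, ⟨v₀, hv₀, hc'v₀⟩, y, hy, (hfix y (Or.inr hy)).trans hcy⟩

theorem stmt9 (V : Type*) [Fintype V] (G : SimpleGraph V) (A₁ A₂ A₃ A₄ A₅ A₆ : Set V)
    (hH : ClassHStar G A₁ A₂ A₃ A₄ A₅ A₆) (k : ℕ) (hchrom : G.chromaticNumber = k)
    (Ai : Set V) (hAi : Ai = A₁ ∨ Ai = A₄) (c : G.Coloring (Fin k)) (j j' : Fin k)
    (hj'on6 : ∃ v ∈ A₆, c v = j') (hj'noti : ¬ ∃ v ∈ Ai, c v = j')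
    (hjoni : ∃ v ∈ Ai, c v = j) (hjnot6 : ¬ ∃ v ∈ A₆, c v = j) :
    ∃ c' : G.Coloring (Fin k),
      (∀ v ∈ A₂ ∪ A₃ ∪ A₆, c' v = c v) ∧
      (∀ v ∈ Ai, c' v ≠ j) ∧ (∃ v ∈ Ai, c' v = j') ∧ (∃ v ∈ A₆, c' v = j') :=
  stmt9_general V G A₁ A₂ A₃ A₄ A₅ A₆ hH k Ai hAi c j j' hj'on6 hj'noti hjoni hjnot6
end

section
/- If G is a k-vertex-critical graph belonging to the class H with partition A1,...,A6, then each of A1, A2, A3, A4 is a clique of G; that is, G belongs to the class H*. -/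
open SimpleGraph

/-!
Each of `A₁, …, A₄` is a module of `G` (every vertex outside it sees all of it or none of it) and
induces a `P₄`-free graph, because another part is anticomplete to it and `G` is co-gem-free. So it
suffices that a `P₄`-free module `S` of a vertex-critical graph is a clique; take `S` minimal
otherwise. By Seinsche's theorem `S` is disconnected or co-disconnected. In the second case the
co-component containing a non-edge is a smaller module that is not a clique. In the first, two
components `K`, `K'` are smaller modules, hence cliques, with the same neighbours outside `K ∪ K'`;
deleting a vertex `u ∈ K` and colouring the rest with `k - 1` colours, every colour of `K'` must
reappear next to `u`, hence in `K \ {u}`, so `|K'| < |K|`, and symmetrically `|K| < |K'|`.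
-/

namespace SimpleGraph

variable {V : Type*} {G : SimpleGraph V} {S T C : Set V} {a b c d e u v w x y z : V}

/-- Unlike `G.induce S`, this lives on `V`, so nested subsets of `V` need no coercions. -/
def restrict (G : SimpleGraph V) (S : Set V) : SimpleGraph V where
  Adj x y := x ∈ S ∧ y ∈ S ∧ G.Adj x y
  symm := ⟨fun _ _ h => ⟨h.2.1, h.1, h.2.2.symm⟩⟩
  loopless := ⟨fun _ h => G.irrefl h.2.2⟩

def PreconnectedOn (G : SimpleGraph V) (S : Set V) : Prop :=
  ∀ x ∈ S, ∀ y ∈ S, (G.restrict S).Reachable x y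

lemma Reachable.exists_boundary_adj {P : V → Prop} (h : G.Reachable x y) (hx : P x) (hy : ¬ P y) :
    ∃ a b, G.Reachable x a ∧ G.Adj a b ∧ P a ∧ ¬ P b := by
  obtain ⟨p⟩ := h
  obtain ⟨e, -, ⟨he, hxe⟩, hey⟩ := p.exists_boundary_dart {a | P a ∧ G.Reachable x a} ⟨hx, .rfl⟩
    fun h => hy h.1
  exact ⟨e.fst, e.snd, hxe, e.adj, he, fun h => hey ⟨h, hxe.trans e.adj.reachable⟩⟩

lemma Reachable.mem_of_restrict (h : (G.restrict S).Reachable x y) (hx : x ∈ S) : y ∈ S := by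
  by_contra hy
  obtain ⟨a, b, -, hab, -, hb⟩ := h.exists_boundary_adj hx hy
  exact hb hab.2.1

lemma preconnectedOn_of_forall_reachable
    (h : ∀ y ∈ S, (G.restrict S).Reachable u y) : G.PreconnectedOn S :=
  fun x hx y hy => (h x hx).symm.trans (h y hy)

lemma PreconnectedOn.exists_adj (hS : G.PreconnectedOn S) (hv : v ∈ S) (hx : x ∈ S)
    (hxv : x ≠ v) : ∃ w ∈ S, G.Adj v w := by
  obtain ⟨a, b, -, hab, rfl, -⟩ := (hS v hv x hx).exists_boundary_adj (P := (· = v)) rfl hxv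
  exact ⟨b, hab.2.1, hab.2.2⟩

def IsInducedP4 (G : SimpleGraph V) (a b c d : V) : Prop :=
  G.Adj a b ∧ G.Adj b c ∧ G.Adj c d ∧ ¬ G.Adj a c ∧ ¬ G.Adj a d ∧ ¬ G.Adj b d

def P4FreeOn (G : SimpleGraph V) (S : Set V) : Prop :=
  ∀ a ∈ S, ∀ b ∈ S, ∀ c ∈ S, ∀ d ∈ S, ¬ G.IsInducedP4 a b c d

lemma IsInducedP4.compl (h : G.IsInducedP4 a b c d) : Gᶜ.IsInducedP4 b d a c := by
  obtain ⟨hab, hbc, hcd, hac, had, hbd⟩ := h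
  have hac' : a ≠ c := by rintro rfl; exact had hcd
  have had' : a ≠ d := by rintro rfl; exact hac hcd.symm
  have hbd' : b ≠ d := by rintro rfl; exact had hab
  simp only [IsInducedP4, compl_adj, not_and, not_not]
  exact ⟨⟨hbd', hbd⟩, ⟨had'.symm, fun h => had h.symm⟩, ⟨hac', hac⟩,
    fun _ => hab.symm, fun _ => hbc, fun _ => hcd.symm⟩

lemma P4FreeOn.compl (h : G.P4FreeOn S) : Gᶜ.P4FreeOn S :=
  fun a ha b hb c hc d hd hP4 => h b hb d hd a ha c hc (by simpa using hP4.compl)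

lemma P4FreeOn.mono (h : G.P4FreeOn T) (hST : S ⊆ T) : G.P4FreeOn S :=
  fun a ha b hb c hc d hd => h a (hST ha) b (hST hb) c (hST hc) d (hST hd)

lemma exists_reachable_adj_of_not_reachable (hS : G.PreconnectedOn (insert v T)) (hx : x ∈ T)
    (hy : y ∈ insert v T) (hxy : ¬ (G.restrict T).Reachable x y) :
    ∃ a, (G.restrict T).Reachable x a ∧ G.Adj a v := by
  obtain ⟨a, b, -, hab, hxa, hxb⟩ :=
    (hS x (Set.mem_insert_of_mem v hx) y hy).exists_boundary_adj .rfl hxy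
  have ha : a ∈ T := hxa.mem_of_restrict hx
  obtain rfl | hb := hab.2.1
  · exact ⟨a, hxa, hab.2.2⟩
  · exact absurd (hxa.trans (Adj.reachable ⟨ha, hb, hab.2.2⟩)) hxb

/-- Otherwise an induced `P₄` runs from the component of `w` in `T` through `v` into another
component of `T`. -/
lemma PreconnectedOn.of_insert (hP4 : G.P4FreeOn (insert v T)) (hS : G.PreconnectedOn (insert v T))
    (hw : w ∈ T) (hvw : ¬ G.Adj v w) : G.PreconnectedOn T := by
  set R := G.restrict T
  by_contra hT
  obtain ⟨z, hz, hwz⟩ : ∃ z ∈ T, ¬ R.Reachable w z := by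
    by_contra! h
    exact hT (preconnectedOn_of_forall_reachable h)
  obtain ⟨c, hwc, hcv⟩ :=
    exists_reachable_adj_of_not_reachable hS hw (Set.mem_insert_of_mem v hz) hwz
  obtain ⟨y, hzy, hyv⟩ := exists_reachable_adj_of_not_reachable hS hz
    (Set.mem_insert_of_mem v hw) fun h => hwz h.symm
  obtain ⟨b, a, hwb, hba, hvb, hva⟩ :=
    hwc.exists_boundary_adj (P := fun t => ¬ G.Adj v t) hvw (not_not.mpr hcv.symm)
  have hwa : R.Reachable w a := hwb.trans hba.reachable
  have hnadj : ∀ t, R.Reachable w t → ¬ G.Adj t y := fun t hwt hty =>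
    hwz (hwt.trans ((show R.Adj t y from
      ⟨hwt.mem_of_restrict hw, hzy.mem_of_restrict hz, hty⟩).reachable.trans hzy.symm))
  refine hP4 b (.inr hba.1) a (.inr hba.2.1) v (.inl rfl) y (.inr (hzy.mem_of_restrict hz))
    ⟨hba.2.2, (not_not.mp hva).symm, hyv.symm, fun h => hvb h.symm, hnadj b hwb, hnadj a hwa⟩

/-- Seinsche's theorem. -/
lemma P4FreeOn.subsingleton [Finite V] (hP4 : G.P4FreeOn S) (hS : G.PreconnectedOn S)
    (hSc : Gᶜ.PreconnectedOn S) : S.Subsingleton := by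
  induction S, S.toFinite using Set.Finite.induction_on with
  | empty => exact Set.subsingleton_empty
  | @insert v T hvT _ ih =>
    rcases T.eq_empty_or_nonempty with rfl | ⟨x, hx⟩
    · simp
    have hxv : x ≠ v := fun h => hvT (h ▸ hx)
    obtain ⟨w₁, hw₁, hvw₁⟩ := hS.exists_adj (.inl rfl) (.inr hx) hxv
    obtain ⟨w₂, hw₂, hvw₂⟩ := hSc.exists_adj (.inl rfl) (.inr hx) hxv
    replace hw₁ : w₁ ∈ T := hw₁.resolve_left hvw₁.ne'
    replace hw₂ : w₂ ∈ T := hw₂.resolve_left hvw₂.ne'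
    rw [compl_adj] at hvw₂
    have hT := ih (hP4.mono (Set.subset_insert v T))
      (hS.of_insert hP4 hw₂ hvw₂.2)
      (hSc.of_insert hP4.compl hw₁ fun h => ((compl_adj G v w₁).mp h).2 hvw₁)
    exact absurd (hT hw₁ hw₂ ▸ hvw₁) hvw₂.2

def IsModule (G : SimpleGraph V) (S : Set V) : Prop :=
  ∀ z ∉ S, ∀ x ∈ S, ∀ y ∈ S, G.Adj z x → G.Adj z y

lemma IsModule.compl (h : G.IsModule S) : Gᶜ.IsModule S := by
  intro z hz x hx y hy hzx
  rw [compl_adj] at hzx ⊢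
  exact ⟨fun h => hz (h ▸ hy), fun h' => hzx.2 (h z hz y hy x hx h')⟩

lemma IsModule.of_subset (hS : G.IsModule S) (hCS : C ⊆ S)
    (hC : ∀ x ∈ C, ∀ z ∈ S, G.Adj x z → z ∈ C) : G.IsModule C := by
  intro z hz x hx y hy hzx
  by_cases hzS : z ∈ S
  · exact absurd (hC x hx z hzS hzx.symm) hz
  · exact hS z hzS x (hCS hx) y (hCS hy) hzx

lemma isModule_of_forall_complete_or_anticomplete
    (h : ∀ z ∉ S, (∀ x ∈ S, G.Adj z x) ∨ ∀ x ∈ S, ¬ G.Adj z x) : G.IsModule S :=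
  fun z hz x hx y hy hzx => (h z hz).resolve_right (fun h' => h' x hx hzx) y hy

lemma Reachable.restrict_of_adj (hux : (G.restrict S).Reachable u x) (hu : u ∈ S) (hz : z ∈ S)
    (hxz : G.Adj x z) : (G.restrict S).Reachable u z :=
  hux.trans (Adj.reachable ⟨hux.mem_of_restrict hu, hz, hxz⟩)

lemma IsModule.setOf_reachable (hS : G.IsModule S) (hu : u ∈ S) :
    G.IsModule {c | (G.restrict S).Reachable u c} :=
  hS.of_subset (fun _ hc => hc.mem_of_restrict hu) fun _ hx _ hz hxz => hx.restrict_of_adj hu hz hxz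

lemma IsModule.setOf_reachable_union (hS : G.IsModule S) (hu : u ∈ S) (hz : z ∈ S) :
    G.IsModule ({c | (G.restrict S).Reachable u c} ∪ {c | (G.restrict S).Reachable z c}) := by
  refine hS.of_subset (Set.union_subset (fun _ hc => hc.mem_of_restrict hu)
    (fun _ hc => hc.mem_of_restrict hz)) ?_
  rintro x (hx | hx) y hy hxy
  exacts [.inl (hx.restrict_of_adj hu hy hxy), .inr (hx.restrict_of_adj hz hy hxy)]

lemma nonempty_coloring_of_forall_adj_ne {α : Type*} (C : (G.induce {u}ᶜ).Coloring α) (c : α)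
    (hc : ∀ z (hz : z ≠ u), G.Adj u z → C ⟨z, hz⟩ ≠ c) : Nonempty (G.Coloring α) := by
  classical
  refine ⟨Coloring.mk (fun x => if hx : x = u then c else C ⟨x, hx⟩) fun {x y} hxy => ?_⟩
  by_cases hx : x = u <;> by_cases hy : y = u
  · exact absurd (hx.trans hy.symm) hxy.ne
  · subst hx; simpa [hy] using (hc y hy hxy).symm
  · subst hy; simpa [hx] using hc x hx hxy.symm
  · simpa [hx, hy] using C.valid (show (G.induce {u}ᶜ).Adj ⟨x, hx⟩ ⟨y, hy⟩ from hxy)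

lemma P4FreeOn.of_cogemFree (hG : HFree cogem G) (he : ∀ x ∈ S, ¬ G.Adj e x) :
    G.P4FreeOn S := by
  rintro a ha b hb c hc d hd ⟨hab, hbc, hcd, hac, had, hbd⟩
  have hea := he a ha; have heb := he b hb; have hec := he c hc; have hed := he d hd
  have : a ≠ b := hab.ne; have : b ≠ c := hbc.ne; have : c ≠ d := hcd.ne
  have : a ≠ c := by rintro rfl; exact had hcd
  have : a ≠ d := by rintro rfl; exact hac hcd.symm
  have : b ≠ d := by rintro rfl; exact had hab
  have : e ≠ a := by rintro rfl; exact heb hab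
  have : e ≠ b := by rintro rfl; exact hea hab.symm
  have : e ≠ c := by rintro rfl; exact hed hcd
  have : e ≠ d := by rintro rfl; exact hec hcd.symm
  let f : Fin 4 ⊕ Fin 1 → V := Sum.elim ![a, b, c, d] fun _ => e
  have hf : f.Injective := by
    rintro (p | p) (q | q) h <;> fin_cases p <;> fin_cases q <;> simp_all [f]
  have hadj (p q) : G.Adj (f p) (f q) ↔ cogem.Adj p q := by
    rcases p with p | p <;> rcases q with q | q <;> fin_cases p <;> fin_cases q <;>
      simp [f, cogem, pathGraph_adj, G.adj_comm, *]
  exact hG.false ⟨⟨f, hf⟩, hadj _ _⟩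

end SimpleGraph

namespace VertexCritical

variable {V : Type*} {G : SimpleGraph V} {S K K' : Set V} {k : ℕ}

lemma pos (hcrit : VertexCritical G k) (u : V) : 0 < k := by
  exact_mod_cast pos_of_gt (hcrit.2 u)

lemma colorable_induce (hcrit : VertexCritical G k) (u : V) :
    (G.induce {u}ᶜ).Colorable (k - 1) := by
  have h := hcrit.2 u
  rw [← Nat.sub_add_cancel (hcrit.pos u), Nat.cast_add, Nat.cast_one,
    ENat.lt_add_one_iff (ENat.natCast_ne_top _)] at h
  exact chromaticNumber_le_iff_colorable.mp h

lemma not_colorable (hcrit : VertexCritical G k) (u : V) :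
    ¬ G.Colorable (k - 1) := fun h => by
  have := h.chromaticNumber_le
  rw [hcrit.1, Nat.cast_le] at this
  have := hcrit.pos u
  omega

lemma exists_adj_color_eq (hcrit : VertexCritical G k)
    (C : (G.induce {u}ᶜ).Coloring (Fin (k - 1))) (c : Fin (k - 1)) :
    ∃ z, ∃ hz : z ≠ u, G.Adj u z ∧ C ⟨z, hz⟩ = c := by
  by_contra! h
  exact hcrit.not_colorable u (nonempty_coloring_of_forall_adj_ne C c h)

/-- Colour `G - u` with `k - 1` colours for some `u ∈ K`: each colour of the clique `K'` must
reappear at a neighbour of `u`, and the module condition places that neighbour in `K \ {u}`. -/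
lemma ncard_lt_of_isModule_union [Finite V] (hcrit : VertexCritical G k)
    (hK' : G.IsClique K') (hK : K.Nonempty) (hdisj : Disjoint K K')
    (hanti : ∀ x ∈ K, ∀ y ∈ K', ¬ G.Adj x y) (hmod : G.IsModule (K ∪ K')) :
    K'.ncard < K.ncard := by
  obtain ⟨u, hu⟩ := hK
  obtain ⟨C⟩ := hcrit.colorable_induce u
  have hne : ∀ w ∈ K', w ≠ u := fun w hw h => hdisj.notMem_of_mem_left hu (h ▸ hw)
  have hside (w) (hw : w ∈ K') (z) (huz : G.Adj u z) (hwz : ¬ G.Adj w z) : z ∈ K := by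
    by_contra hzK
    have hzK' : z ∉ K' := fun hzK' => hanti u hu z hzK' huz
    exact hwz (hmod z (by simp [hzK, hzK']) u (.inl hu) w (.inr hw) huz.symm).symm
  have key (w) (hw : w ∈ K') : ∃ z, ∃ hz : z ≠ u, z ∈ K ∧ C ⟨z, hz⟩ = C ⟨w, hne w hw⟩ := by
    obtain ⟨z, hz, huz, hCz⟩ := hcrit.exists_adj_color_eq C (C ⟨w, hne w hw⟩)
    refine ⟨z, hz, hside w hw z huz fun hwz => ?_, hCz⟩
    exact C.valid (show (G.induce {u}ᶜ).Adj ⟨w, hne w hw⟩ ⟨z, hz⟩ from hwz) hCz.symm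
  choose! f hfu hfK hfC using key
  calc K'.ncard ≤ (K \ {u}).ncard := by
        refine Set.ncard_le_ncard_of_injOn f (fun w hw => ⟨hfK w hw, hfu w hw⟩) ?_
        intro w hw w' hw' hww'
        by_contra hne'
        refine C.valid (show (G.induce {u}ᶜ).Adj ⟨w, hne w hw⟩ ⟨w', hne w' hw'⟩ from
          hK' hw hw' hne') ?_
        rw [← hfC w hw, ← hfC w' hw']
        simp only [hww']
    _ < K.ncard := Set.ncard_sdiff_singleton_lt_of_mem hu

lemma not_isModule_union [Finite V] (hcrit : VertexCritical G k)
    (hK : G.IsClique K) (hK' : G.IsClique K') (hne : K.Nonempty) (hne' : K'.Nonempty)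
    (hdisj : Disjoint K K') (hanti : ∀ x ∈ K, ∀ y ∈ K', ¬ G.Adj x y) :
    ¬ G.IsModule (K ∪ K') := fun hmod =>
  lt_asymm (hcrit.ncard_lt_of_isModule_union hK' hne hdisj hanti hmod)
    (hcrit.ncard_lt_of_isModule_union hK hne' hdisj.symm (fun y hy x hx h => hanti x hx y hy h.symm)
      (Set.union_comm K K' ▸ hmod))

theorem isClique_of_isModule [Finite V] (hcrit : VertexCritical G k)
    (hS : G.IsModule S) (hP4 : G.P4FreeOn S) : G.IsClique S := by
  induction S using WellFoundedLT.induction with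
  | _ S ih =>
  have hsub (T) (hTS : T ⊆ S) (hTne : T ≠ S) (hT : G.IsModule T) : G.IsClique T :=
    ih T (hTS.ssubset_of_ne hTne) hT (hP4.mono hTS)
  by_contra hnc
  obtain ⟨u, hu, v, hv, huv, hnadj⟩ : ∃ u ∈ S, ∃ v ∈ S, u ≠ v ∧ ¬ G.Adj u v := by
    simpa [IsClique, Set.Pairwise] using hnc
  by_cases hconn : G.PreconnectedOn S
  · set C := {c | (Gᶜ.restrict S).Reachable u c}
    have hCS : C ≠ S := fun h => huv (hP4.subsingleton hconn
      (preconnectedOn_of_forall_reachable fun y hy => (h ▸ hy : y ∈ C)) hu hv)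
    have hC : G.IsClique C := hsub C (fun _ hc => hc.mem_of_restrict hu) hCS
      (by simpa using (hS.compl.setOf_reachable hu).compl)
    have hvC : v ∈ C := Adj.reachable ⟨hu, hv, (compl_adj G u v).mpr ⟨huv, hnadj⟩⟩
    exact hnadj (hC Reachable.rfl hvC huv)
  · obtain ⟨z, hz, huz⟩ : ∃ z ∈ S, ¬ (G.restrict S).Reachable u z := by
      by_contra! h
      exact hconn (preconnectedOn_of_forall_reachable h)
    set K := {c | (G.restrict S).Reachable u c}
    set K' := {c | (G.restrict S).Reachable z c}
    have hKS : K ⊆ S := fun _ hc => hc.mem_of_restrict hu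
    have hK'S : K' ⊆ S := fun _ hc => hc.mem_of_restrict hz
    have hzK : z ∉ K := huz
    have huK' : u ∉ K' := fun h => huz h.symm
    refine hcrit.not_isModule_union
      (hsub K hKS (fun h => hzK (h ▸ hz)) (hS.setOf_reachable hu))
      (hsub K' hK'S (fun h => huK' (h ▸ hu)) (hS.setOf_reachable hz)) ⟨u, .rfl⟩ ⟨z, .rfl⟩
      (Set.disjoint_left.mpr fun c huc hzc => huz (huc.trans hzc.symm))
      (fun x hx y hy hxy => huz ((hx.restrict_of_adj hu (hK'S hy) hxy).trans hy.symm))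
      (hS.setOf_reachable_union hu hz)

end VertexCritical

namespace ClassH

variable {V : Type*} {G : SimpleGraph V} {A₁ A₂ A₃ A₄ A₅ A₆ : Set V}

lemma mem_cases (hH : ClassH G A₁ A₂ A₃ A₄ A₅ A₆) (z : V) :
    z ∈ A₁ ∨ z ∈ A₂ ∨ z ∈ A₃ ∨ z ∈ A₄ ∨ z ∈ A₅ ∨ z ∈ A₆ := by
  have hz : z ∈ A₁ ∪ A₂ ∪ A₃ ∪ A₄ ∪ A₅ ∪ A₆ := hH.cover ▸ Set.mem_univ z
  simp only [Set.mem_union] at hz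
  tauto

lemma isModule₁ (hH : ClassH G A₁ A₂ A₃ A₄ A₅ A₆) : G.IsModule A₁ :=
  isModule_of_forall_complete_or_anticomplete fun z hz => by
    rcases hH.mem_cases z with h | h | h | h | h | h
    · exact absurd h hz
    · exact .inl fun x hx => hH.comp₂ z h x (by simp [hx])
    · exact .inr fun x hx hzx => hH.anti₁ x hx z (by simp [h]) hzx.symm
    · exact .inr fun x hx hzx => hH.anti₁ x hx z (by simp [h]) hzx.symm
    · exact .inl fun x hx => (hH.comp₁ x hx z (by simp [h])).symm
    · exact .inr fun x hx hzx => hH.anti₁ x hx z (by simp [h]) hzx.symm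

lemma isModule₂ (hH : ClassH G A₁ A₂ A₃ A₄ A₅ A₆) : G.IsModule A₂ :=
  isModule_of_forall_complete_or_anticomplete fun z hz => by
    rcases hH.mem_cases z with h | h | h | h | h | h
    · exact .inl fun x hx => hH.comp₁ z h x (by simp [hx])
    · exact absurd h hz
    · exact .inl fun x hx => hH.comp₃ z h x (by simp [hx])
    · exact .inr fun x hx => hH.anti₄ z h x (by simp [hx])
    · exact .inr fun x hx hzx => hH.anti₂ x hx z (by simp [h]) hzx.symm
    · exact .inl fun x hx => (hH.comp₂ x hx z (by simp [h])).symm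

lemma isModule₃ (hH : ClassH G A₁ A₂ A₃ A₄ A₅ A₆) : G.IsModule A₃ :=
  isModule_of_forall_complete_or_anticomplete fun z hz => by
    rcases hH.mem_cases z with h | h | h | h | h | h
    · exact .inr fun x hx => hH.anti₁ z h x (by simp [hx])
    · exact .inl fun x hx => hH.comp₂ z h x (by simp [hx])
    · exact absurd h hz
    · exact .inl fun x hx => hH.comp₄ z h x (by simp [hx])
    · exact .inr fun x hx hzx => hH.anti₃ x hx z (by simp [h]) hzx.symm
    · exact .inl fun x hx => (hH.comp₃ x hx z (by simp [h])).symm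

lemma isModule₄ (hH : ClassH G A₁ A₂ A₃ A₄ A₅ A₆) : G.IsModule A₄ :=
  isModule_of_forall_complete_or_anticomplete fun z hz => by
    rcases hH.mem_cases z with h | h | h | h | h | h
    · exact .inr fun x hx => hH.anti₁ z h x (by simp [hx])
    · exact .inr fun x hx => hH.anti₂ z h x (by simp [hx])
    · exact .inl fun x hx => hH.comp₃ z h x (by simp [hx])
    · exact absurd h hz
    · exact .inl fun x hx => (hH.comp₄ x hx z (by simp [h])).symm
    · exact .inr fun x hx hzx => hH.anti₄ x hx z (by simp [h]) hzx.symm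

end ClassH

theorem stmt10 (k : ℕ) (V : Type*) [Fintype V] (G : SimpleGraph V)
    (A₁ A₂ A₃ A₄ A₅ A₆ : Set V) (hH : ClassH G A₁ A₂ A₃ A₄ A₅ A₆)
    (hcrit : VertexCritical G k) :
    G.IsClique A₁ ∧ G.IsClique A₂ ∧ G.IsClique A₃ ∧ G.IsClique A₄ := by
  obtain ⟨e₁, he₁⟩ := hH.ne₁
  obtain ⟨e₄, he₄⟩ := hH.ne₄
  refine ⟨hcrit.isClique_of_isModule hH.isModule₁ ?_, hcrit.isClique_of_isModule hH.isModule₂ ?_,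
    hcrit.isClique_of_isModule hH.isModule₃ ?_, hcrit.isClique_of_isModule hH.isModule₄ ?_⟩
  · exact .of_cogemFree hH.cogemFree fun x hx => hH.anti₄ e₄ he₄ x (by simp [hx])
  · exact .of_cogemFree hH.cogemFree fun x hx => hH.anti₄ e₄ he₄ x (by simp [hx])
  · exact .of_cogemFree hH.cogemFree fun x hx => hH.anti₁ e₁ he₁ x (by simp [hx])
  · exact .of_cogemFree hH.cogemFree fun x hx => hH.anti₁ e₁ he₁ x (by simp [hx])
end

section
/- Let G be a k-vertex-critical graph belonging to the class H* with partition A1,...,A6 and with |A4| ≤ |A1|. Then the chromatic number of the subgraph of G induced by A6 is strictly less than |A4|. -/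
open SimpleGraph

/-!
Suppose `χ(G[A₆]) ≥ |A₄|`. Fix `v ∈ A₄` and a `(k-1)`-colouring of `G - v`. The vertex `v` only
sees `A₃ ∪ A₄ ∪ A₅`, and `A₄ - v` uses at most `|A₄| - 1` colours, while `A₆` uses at least
`|A₄|` colours and the clique `A₁` uses `|A₁| ≥ |A₄|`. So some colour `α` of `A₆` and some colour
`γ` of `A₁` are absent from `A₄ - v`. Since `A₃` is complete to `A₆` and `A₁` to `A₅`, either one
of them is free for `v`, or `α` lives only on `A₅ ∪ A₆` and `γ` only on `A₁ ∪ A₃`; then swapping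
`α` and `γ` on `A₁ ∪ A₅` frees `α` for `v`. Either way `G` is `(k-1)`-colourable.
-/

namespace SimpleGraph

variable {V β : Type*} {G : SimpleGraph V}

def IsColoringOn (G : SimpleGraph V) (s : Set V) (f : V → β) : Prop :=
  ∀ ⦃x⦄, x ∈ s → ∀ ⦃y⦄, y ∈ s → G.Adj x y → f x ≠ f y

theorem Coloring.exists_isColoringOn {s : Set V} (C : (G.induce s).Coloring β)
    (hs : s.Nonempty) : ∃ f : V → β, G.IsColoringOn s f := by
  classical
  refine ⟨fun x => if hx : x ∈ s then C ⟨x, hx⟩ else C ⟨hs.some, hs.some_mem⟩, ?_⟩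
  intro x hx y hy hxy
  simpa only [dif_pos hx, dif_pos hy] using C.valid (v := ⟨x, hx⟩) (w := ⟨y, hy⟩) hxy

namespace IsColoringOn

variable {s t : Set V} {f : V → β}

theorem mono (h : G.IsColoringOn s f) (hts : t ⊆ s) : G.IsColoringOn t f :=
  fun _ hx _ hy => h (hts hx) (hts hy)

theorem injOn_of_isClique (h : G.IsColoringOn s f) (hc : G.IsClique s) : s.InjOn f :=
  fun _ hx _ hy hxy => by_contra fun hne => h hx hy (hc hx hy hne) hxy

theorem disjoint_image {A B : Set V} (h : G.IsColoringOn s f) (hA : A ⊆ s) (hB : B ⊆ s)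
    (hAB : ∀ x ∈ A, ∀ y ∈ B, G.Adj x y) : Disjoint (f '' A) (f '' B) := by
  rw [Set.disjoint_left]
  rintro _ ⟨x, hx, rfl⟩ ⟨y, hy, hxy⟩
  exact h (hA hx) (hB hy) (hAB x hx y hy) hxy.symm

theorem chromaticNumber_induce_le (h : G.IsColoringOn s f) (hs : s.Finite) :
    (G.induce s).chromaticNumber ≤ (f '' s).ncard := by
  have := (hs.image f).fintype
  let C : (G.induce s).Coloring (f '' s) :=
    Coloring.mk (fun x => ⟨f x, x, x.2, rfl⟩) fun hxy heq =>
      h (Subtype.prop _) (Subtype.prop _) hxy (congrArg Subtype.val heq)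
  have hC := C.colorable.chromaticNumber_le
  rwa [← Nat.card_eq_fintype_card, Nat.card_coe_set_eq] at hC

theorem piecewise_swap [DecidableEq β] (h : G.IsColoringOn s f) {S : Set V}
    [DecidablePred (· ∈ S)] {α γ : β}
    (hαγ : ∀ ⦃x⦄, x ∈ s → x ∈ S → ∀ ⦃y⦄, y ∈ s → y ∉ S → G.Adj x y → f x = α → f y ≠ γ)
    (hγα : ∀ ⦃x⦄, x ∈ s → x ∈ S → ∀ ⦃y⦄, y ∈ s → y ∉ S → G.Adj x y → f x = γ → f y ≠ α) :
    G.IsColoringOn s (S.piecewise (fun x => Equiv.swap α γ (f x)) f) := by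
  have key : ∀ ⦃x⦄, x ∈ s → x ∈ S → ∀ ⦃y⦄, y ∈ s → y ∉ S → G.Adj x y →
      Equiv.swap α γ (f x) ≠ f y := by
    intro x hx hxS y hy hyS hxy
    rw [Equiv.swap_apply_def]
    split_ifs with hxα hxγ
    · exact (hαγ hx hxS hy hyS hxy hxα).symm
    · exact (hγα hx hxS hy hyS hxy hxγ).symm
    · exact h hx hy hxy
  intro x hx y hy hxy
  by_cases hxS : x ∈ S <;> by_cases hyS : y ∈ S <;>
    simp only [Set.piecewise_eq_of_mem, Set.piecewise_eq_of_notMem, hxS, hyS, not_false_eq_true]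
  · exact (Equiv.injective _).ne (h hx hy hxy)
  · exact key hx hxS hy hyS hxy
  · exact (key hy hyS hx hxS hxy.symm).symm
  · exact h hx hy hxy

theorem nonempty_coloring_update [DecidableEq V] {v : V} (h : G.IsColoringOn {v}ᶜ f) {b : β}
    (hb : ∀ w, G.Adj v w → f w ≠ b) : Nonempty (G.Coloring β) := by
  refine ⟨Coloring.mk (Function.update f v b) fun {x y} hxy => ?_⟩
  by_cases hx : x = v <;> by_cases hy : y = v
  · exact absurd (hx.trans hy.symm) hxy.ne
  · subst hx
    rw [Function.update_self, Function.update_of_ne hy]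
    exact (hb y hxy).symm
  · subst hy
    rw [Function.update_self, Function.update_of_ne hx]
    exact hb x hxy.symm
  · rw [Function.update_of_ne hx, Function.update_of_ne hy]
    exact h hx hy hxy

end IsColoringOn

end SimpleGraph

section Partition

variable {V : Type*} {G : SimpleGraph V} {A₁ A₂ A₃ A₄ A₅ A₆ : Set V}

theorem ClassH.notMem_of_mem₄ (hH : ClassH G A₁ A₂ A₃ A₄ A₅ A₆) {v : V} (hv : v ∈ A₄) :
    v ∉ A₁ ∧ v ∉ A₂ ∧ v ∉ A₃ ∧ v ∉ A₅ ∧ v ∉ A₆ := by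
  have hd := hH.disj
  simp only [List.pairwise_cons, List.mem_cons, List.not_mem_nil, forall_eq_or_imp,
    Set.disjoint_left] at hd
  grind

theorem ClassH.mem_of_adj_of_mem₁ (hH : ClassH G A₁ A₂ A₃ A₄ A₅ A₆) {x y : V} (hx : x ∈ A₁)
    (hxy : G.Adj x y) : y ∈ A₁ ∪ A₂ ∪ A₅ := by
  have hy : y ∈ A₁ ∪ A₂ ∪ A₃ ∪ A₄ ∪ A₅ ∪ A₆ := hH.cover ▸ Set.mem_univ y
  have := hH.anti₁ x hx y
  simp only [Set.mem_union] at hy this ⊢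
  tauto

theorem ClassH.mem_of_adj_of_mem₄ (hH : ClassH G A₁ A₂ A₃ A₄ A₅ A₆) {x y : V} (hx : x ∈ A₄)
    (hxy : G.Adj x y) : y ∈ A₃ ∪ A₄ ∪ A₅ := by
  have hy : y ∈ A₁ ∪ A₂ ∪ A₃ ∪ A₄ ∪ A₅ ∪ A₆ := hH.cover ▸ Set.mem_univ y
  have := hH.anti₄ x hx y
  simp only [Set.mem_union] at hy this ⊢
  tauto

theorem ClassH.mem_of_adj_of_mem₅ (hH : ClassH G A₁ A₂ A₃ A₄ A₅ A₆) {x y : V} (hx : x ∈ A₅)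
    (hxy : G.Adj x y) : y ∈ A₁ ∪ A₄ ∪ A₅ ∪ A₆ := by
  have hy : y ∈ A₁ ∪ A₂ ∪ A₃ ∪ A₄ ∪ A₅ ∪ A₆ := hH.cover ▸ Set.mem_univ y
  have h₂ := fun h => hH.anti₂ y h x (.inr hx) hxy.symm
  have h₃ := fun h => hH.anti₃ y h x (.inr hx) hxy.symm
  simp only [Set.mem_union] at hy ⊢
  tauto

variable {β : Type*} {v : V} {f : V → β}

theorem ClassH.nonempty_coloring_of_notMem_image (hH : ClassH G A₁ A₂ A₃ A₄ A₅ A₆)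
    (hv : v ∈ A₄) (hf : G.IsColoringOn {v}ᶜ f) {δ : β} (h₃ : δ ∉ f '' A₃)
    (h₄ : δ ∉ f '' (A₄ \ {v})) (h₅ : δ ∉ f '' A₅) : Nonempty (G.Coloring β) := by
  classical
  refine hf.nonempty_coloring_update (b := δ) fun w hvw hw => ?_
  rcases hH.mem_of_adj_of_mem₄ hv hvw with (hw₃ | hw₄) | hw₅
  · exact h₃ ⟨w, hw₃, hw⟩
  · exact h₄ ⟨w, ⟨hw₄, hvw.ne'⟩, hw⟩
  · exact h₅ ⟨w, hw₅, hw⟩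

theorem ClassH.disjoint_image_of_isColoringOn (hH : ClassH G A₁ A₂ A₃ A₄ A₅ A₆)
    (hv : v ∈ A₄) (hf : G.IsColoringOn {v}ᶜ f) :
    Disjoint (f '' A₁) (f '' A₅) ∧ Disjoint (f '' A₂) (f '' A₆) ∧
      Disjoint (f '' A₃) (f '' A₆) := by
  obtain ⟨hv₁, hv₂, hv₃, hv₅, hv₆⟩ := hH.notMem_of_mem₄ hv
  simp only [← Set.subset_compl_singleton_iff] at hv₁ hv₂ hv₃ hv₅ hv₆
  exact ⟨hf.disjoint_image hv₁ hv₅ fun x hx y hy => hH.comp₁ x hx y (.inr hy),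
    hf.disjoint_image hv₂ hv₆ fun x hx y hy => hH.comp₂ x hx y (.inr hy),
    hf.disjoint_image hv₃ hv₆ fun x hx y hy => hH.comp₃ x hx y (.inr hy)⟩

theorem ClassH.nonempty_coloring_of_kempe (hH : ClassH G A₁ A₂ A₃ A₄ A₅ A₆)
    (hv : v ∈ A₄) (hf : G.IsColoringOn {v}ᶜ f) {α γ : β}
    (hα₅ : α ∈ f '' A₅) (hα₆ : α ∈ f '' A₆) (hα₄ : α ∉ f '' (A₄ \ {v}))
    (hγ₁ : γ ∈ f '' A₁) (hγ₃ : γ ∈ f '' A₃) (hγ₄ : γ ∉ f '' (A₄ \ {v})) :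
    Nonempty (G.Coloring β) := by
  classical
  obtain ⟨h₁₅, h₂₆, h₃₆⟩ := hH.disjoint_image_of_isColoringOn hv hf
  have hg : G.IsColoringOn {v}ᶜ ((A₁ ∪ A₅).piecewise (fun x => Equiv.swap α γ (f x)) f) := by
    refine hf.piecewise_swap ?_ ?_
    · rintro x - hxS y hy hyS hxy rfl hfy
      have hx₅ : x ∈ A₅ := hxS.resolve_left fun hx₁ => Set.disjoint_left.1 h₁₅ ⟨x, hx₁, rfl⟩ hα₅
      rcases hH.mem_of_adj_of_mem₅ hx₅ hxy with ((hy₁ | hy₄) | hy₅) | hy₆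
      · exact hyS (.inl hy₁)
      · exact hγ₄ ⟨y, ⟨hy₄, hy⟩, hfy⟩
      · exact hyS (.inr hy₅)
      · exact Set.disjoint_left.1 h₃₆ hγ₃ ⟨y, hy₆, hfy⟩
    · rintro x - hxS y - hyS hxy rfl hfy
      have hx₁ : x ∈ A₁ := hxS.resolve_right fun hx₅ => Set.disjoint_left.1 h₁₅ hγ₁ ⟨x, hx₅, rfl⟩
      rcases hH.mem_of_adj_of_mem₁ hx₁ hxy with (hy₁ | hy₂) | hy₅
      · exact hyS (.inl hy₁)
      · exact Set.disjoint_left.1 h₂₆ ⟨y, hy₂, hfy⟩ hα₆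
      · exact hyS (.inr hy₅)
  refine hg.nonempty_coloring_update (b := α) fun w hvw hw => ?_
  by_cases hw₅ : w ∈ A₅
  · rw [Set.piecewise_eq_of_mem _ _ _ (.inr hw₅), Equiv.swap_apply_eq_iff,
      Equiv.swap_apply_left] at hw
    exact Set.disjoint_left.1 h₁₅ hγ₁ ⟨w, hw₅, hw⟩
  have hw₁ : w ∉ A₁ := fun hw₁ => hH.anti₁ w hw₁ v (.inl (.inr hv)) hvw.symm
  rw [Set.piecewise_eq_of_notMem _ _ _ fun h => h.elim hw₁ hw₅] at hw
  rcases hH.mem_of_adj_of_mem₄ hv hvw with (hw₃ | hw₄) | hw₅'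
  · exact Set.disjoint_left.1 h₃₆ ⟨w, hw₃, hw⟩ hα₆
  · exact hα₄ ⟨w, ⟨hw₄, hvw.ne'⟩, hw⟩
  · exact hw₅ hw₅'

theorem ClassH.nonempty_coloring_of_isColoringOn (hH : ClassH G A₁ A₂ A₃ A₄ A₅ A₆)
    (hv : v ∈ A₄) (hf : G.IsColoringOn {v}ᶜ f) {α γ : β}
    (hα₆ : α ∈ f '' A₆) (hα₄ : α ∉ f '' (A₄ \ {v}))
    (hγ₁ : γ ∈ f '' A₁) (hγ₄ : γ ∉ f '' (A₄ \ {v})) :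
    Nonempty (G.Coloring β) := by
  obtain ⟨h₁₅, -, h₃₆⟩ := hH.disjoint_image_of_isColoringOn hv hf
  by_cases hα₅ : α ∈ f '' A₅
  · by_cases hγ₃ : γ ∈ f '' A₃
    · exact hH.nonempty_coloring_of_kempe hv hf hα₅ hα₆ hα₄ hγ₁ hγ₃ hγ₄
    · exact hH.nonempty_coloring_of_notMem_image hv hf hγ₃ hγ₄ (Set.disjoint_left.1 h₁₅ hγ₁)
  · exact hH.nonempty_coloring_of_notMem_image hv hf
      (fun hα₃ => Set.disjoint_left.1 h₃₆ hα₃ hα₆) hα₄ hα₅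

end Partition

theorem VertexCritical.exists_colorable_induce_compl {V : Type*} {G : SimpleGraph V} {k : ℕ}
    (h : VertexCritical G k) (v : V) : ∃ m : ℕ, (G.induce {v}ᶜ).Colorable m ∧ ¬ G.Colorable m := by
  obtain ⟨m, hm⟩ := ENat.ne_top_iff_exists.1 (h.2 v).ne_top
  refine ⟨m, chromaticNumber_le_iff_colorable.1 hm.symm.le, fun hG => ?_⟩
  have hmk : (m : ℕ∞) < k := hm ▸ h.2 v
  exact (hmk.trans_le (h.1 ▸ hG.chromaticNumber_le)).false

theorem stmt11 (k : ℕ) (V : Type*) [Fintype V] (G : SimpleGraph V)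
    (A₁ A₂ A₃ A₄ A₅ A₆ : Set V) (hH : ClassHStar G A₁ A₂ A₃ A₄ A₅ A₆)
    (hcrit : VertexCritical G k) (hcard : A₄.ncard ≤ A₁.ncard) :
    (G.induce A₆).chromaticNumber < (A₄.ncard : ℕ∞) := by
  by_contra! hχ
  obtain ⟨v, hv⟩ := hH.ne₄
  obtain ⟨u, hu⟩ := hH.ne₁
  obtain ⟨hv₁, -, -, -, hv₆⟩ := hH.notMem_of_mem₄ hv
  obtain ⟨m, hcol, hncol⟩ := hcrit.exists_colorable_induce_compl v
  obtain ⟨f, hf⟩ := hcol.some.exists_isColoringOn ⟨u, fun h => hv₁ (h ▸ hu)⟩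
  have hA₄ : (f '' (A₄ \ {v})).ncard < A₄.ncard :=
    (Set.ncard_image_le (Set.toFinite _)).trans_lt (Set.ncard_sdiff_singleton_lt_of_mem hv)
  have hA₆ : A₄.ncard ≤ (f '' A₆).ncard := by
    exact_mod_cast hχ.trans
      ((hf.mono (Set.subset_compl_singleton_iff.2 hv₆)).chromaticNumber_induce_le A₆.toFinite)
  have hA₁ : (f '' A₁).ncard = A₁.ncard :=
    ((hf.mono (Set.subset_compl_singleton_iff.2 hv₁)).injOn_of_isClique hH.clique₁).ncard_image
  obtain ⟨α, hα₆, hα₄⟩ := Set.exists_mem_notMem_of_ncard_lt_ncard (hA₄.trans_le hA₆)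
  obtain ⟨γ, hγ₁, hγ₄⟩ :=
    Set.exists_mem_notMem_of_ncard_lt_ncard (hA₄.trans_le (hcard.trans hA₁.ge))
  exact hncol (hH.nonempty_coloring_of_isColoringOn hv hf hα₆ hα₄ hγ₁ hγ₄)
end

section
/- For every integer m ≥ 3, every finite simple graph that is gem-free and co-gem-free contains no induced cycle of length 2m+1 and no induced subgraph isomorphic to the complement of a cycle of length 2m+1. -/
open SimpleGraph

/-! For `n ≥ 7` the vertices `0, 1, 2, 3, 5` of `Cₙ` induce a co-gem, so `Cₙ` contains an
induced co-gem and, passing to complements, `Cₙᶜ` contains an induced gem. -/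

lemma HFree.of_embedding {U W V : Type*} {H : SimpleGraph U} {K : SimpleGraph W}
    {G : SimpleGraph V} (e : H ↪g K) (h : HFree H G) : HFree K G :=
  ⟨fun f => h.false (f.comp e)⟩

lemma cycleGraph_adj_iff_of_val_add_one_lt {n : ℕ} {u v : Fin n} (hu : u.val + 1 < n)
    (hv : v.val + 1 < n) : (cycleGraph n).Adj u v ↔ u.val + 1 = v.val ∨ v.val + 1 = u.val := by
  rw [cycleGraph_adj']
  rcases lt_trichotomy u v with huv | rfl | hvu
  · rw [Fin.sub_val_of_le huv.le, Fin.coe_sub_iff_lt.mpr huv]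
    rw [Fin.lt_def] at huv
    omega
  · simp [Fin.sub_val_of_le le_rfl]
  · rw [Fin.sub_val_of_le hvu.le, Fin.coe_sub_iff_lt.mpr hvu]
    rw [Fin.lt_def] at hvu
    omega

def cogemVertexToCycle {n : ℕ} (hn : 7 ≤ n) : Fin 4 ⊕ Fin 1 → Fin n
  | .inl i => ⟨i, by omega⟩
  | .inr _ => ⟨5, by omega⟩

lemma cogemVertexToCycle_injective {n : ℕ} (hn : 7 ≤ n) :
    Function.Injective (cogemVertexToCycle hn) := by
  rintro (a | a) (b | b) h <;> simp only [cogemVertexToCycle, Fin.mk.injEq] at h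
  · exact congrArg Sum.inl (Fin.ext h)
  · omega
  · omega
  · exact congrArg Sum.inr (Subsingleton.elim a b)

def cogemEmbeddingCycleGraph {n : ℕ} (hn : 7 ≤ n) : cogem ↪g cycleGraph n where
  toFun := cogemVertexToCycle hn
  inj' := cogemVertexToCycle_injective hn
  map_rel_iff' := by
    rintro (a | a) (b | b) <;>
      simp only [Function.Embedding.coeFn_mk, cogemVertexToCycle, cogem, sum_adj, pathGraph_adj,
        bot_adj] <;>
      rw [cycleGraph_adj_iff_of_val_add_one_lt] <;> simp only [iff_false] <;>
      omega

theorem stmt14_general (m : ℕ) (hm : 3 ≤ m) (V : Type*) (G : SimpleGraph V)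
    (hgem : HFree gem G) (hcogem : HFree cogem G) :
    HFree (cycleGraph (2 * m + 1)) G ∧ HFree (cycleGraph (2 * m + 1))ᶜ G := by
  have e : cogem ↪g cycleGraph (2 * m + 1) := cogemEmbeddingCycleGraph (by omega)
  exact ⟨hcogem.of_embedding e, hgem.of_embedding (Embedding.complEquiv e)⟩

theorem stmt14 (m : ℕ) (hm : 3 ≤ m) (V : Type*) [Fintype V] (G : SimpleGraph V)
    (hgem : HFree gem G) (hcogem : HFree cogem G) :
    HFree (cycleGraph (2 * m + 1)) G ∧ HFree (cycleGraph (2 * m + 1))ᶜ G :=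
  stmt14_general m hm V G hgem hcogem
end
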